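/- arXiv:1005.1256 — 8 statements merged into one kernel-verified Lean document; each statement's English description precedes it below -/
import Mathlib

section
/- Let G be an unmixed bipartite graph on vertex set {x_1,...,x_n} ∪ {y_1,...,y_n} with n ≥ 2, satisfying: (a) {x_i, y_i} ∈ E(G) for all i, and (b) if {x_i,y_j} ∈ E(G) and {x_j,y_k} ∈ E(G) then {x_i,y_k} ∈ E(G) for distinct i,j,k. Suppose G has an induced subgraph equal to the complete bipartite graph on {x_i,x_j} ∪ {y_i,y_j} for some i < j. Let H be the induced subgraph on the vertex set minus {x_j, y_j}. Then for any subset C of the vertices of H with x_i ∈ C: C is a minimal vertex cover of H if and only if C ∪ {x_j} is a minimal vertex cover of G. -/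
/-- `C` is a vertex cover of the subgraph of the bipartite graph with
edge relation `E` (edges `{x i, y j}` for `E i j`) induced on the vertices
`{x i, y i : i ∈ F}`. -/
def IsCoverOn (n : ℕ) (E : Fin n → Fin n → Prop) (F : Set (Fin n))
    (C : Set (Fin n ⊕ Fin n)) : Prop :=
  (∀ v ∈ C, Sum.elim (· ∈ F) (· ∈ F) v) ∧
  (∀ i ∈ F, ∀ j ∈ F, E i j → Sum.inl i ∈ C ∨ Sum.inr j ∈ C)

/-- `C` is a minimal vertex cover of the induced subgraph on `F`. -/
def IsMinCoverOn (n : ℕ) (E : Fin n → Fin n → Prop) (F : Set (Fin n))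
    (C : Set (Fin n ⊕ Fin n)) : Prop :=
  IsCoverOn n E F C ∧ ∀ D ⊂ C, ¬ IsCoverOn n E F D

/-- The vertex set `{x k : k ∈ α} ∪ {y k : k ∈ F \ α}` attached to `α ⊆ F`. -/
def coverSetOn (n : ℕ) (F α : Set (Fin n)) : Set (Fin n ⊕ Fin n) :=
  (Sum.inl '' α) ∪ (Sum.inr '' (F \ α))

/-- The lattice `L_{G_F}` of the induced subgraph `G_F`: those `α ⊆ F` whose
associated vertex set is a minimal vertex cover of `G_F`. -/
def LGF (n : ℕ) (E : Fin n → Fin n → Prop) (F : Set (Fin n)) : Set (Set (Fin n)) :=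
  {α | α ⊆ F ∧ IsMinCoverOn n E F (coverSetOn n F α)}

/-!
In a minimal cover containing `x i`, the vertex `y i` is absent: dropping `y i` would leave an
edge `x l y i` uncovered and dropping `x i` an edge `x i y m`, and by (b) (or (a) if `l = m`) the
edge `x l y m` would then be uncovered. As `y i` is absent and `x j y i` is an edge, (b) forces
every `x k` adjacent to `y j` into the cover of `H`, so adding `x j` turns covers of `H` into
covers of `G` and back, preserving strict inclusions.
-/

theorem Set.union_singleton_ssubset_union_singleton_iff {α : Type*} {a : α} {s t : Set α}
    (hs : a ∉ s) (ht : a ∉ t) : s ∪ {a} ⊂ t ∪ {a} ↔ s ⊂ t := by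
  simp only [Set.union_singleton, Set.ssubset_def,
    Set.insert_subset_insert_iff hs, Set.insert_subset_insert_iff ht]

namespace IsCoverOn

variable {n : ℕ} {E : Fin n → Fin n → Prop}

theorem union_inl_univ_iff {j : Fin n} {D : Set (Fin n ⊕ Fin n)}
    (hD : ∀ v ∈ D, Sum.elim (· ≠ j) (· ≠ j) v) :
    IsCoverOn n E Set.univ (D ∪ {Sum.inl j}) ↔
      IsCoverOn n E {k | k ≠ j} D ∧ ∀ k, k ≠ j → E k j → Sum.inl k ∈ D := by
  constructor
  · rintro ⟨-, hcov⟩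
    have hyj : Sum.inr j ∉ D := fun h => hD _ h rfl
    refine ⟨⟨hD, fun k hk m _ hE => ?_⟩, fun k hk hE => ?_⟩
    · simpa [show k ≠ j from hk] using hcov k trivial m trivial hE
    · simpa [hk, hyj] using hcov k trivial j trivial hE
  · rintro ⟨⟨-, hcov⟩, hj⟩
    refine ⟨fun v _ => by cases v <;> trivial, fun k _ m _ hE => ?_⟩
    by_cases hkj : k = j
    · simp [hkj]
    by_cases hmj : m = j
    · subst hmj
      simp [hj k hkj hE]
    · simpa [hkj] using hcov k hkj m hmj hE

theorem inl_mem_of_rel_of_rel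
    (hb : ∀ i j k : Fin n, i ≠ j → j ≠ k → i ≠ k → E i j → E j k → E i k)
    {F : Set (Fin n)} {D : Set (Fin n ⊕ Fin n)} (hD : IsCoverOn n E F D)
    {i j k : Fin n} (hiF : i ∈ F) (hkF : k ∈ F) (hij : i ≠ j) (hkj : k ≠ j)
    (hEkj : E k j) (hEji : E j i) (hxi : Sum.inl i ∈ D) (hyi : Sum.inr i ∉ D) :
    Sum.inl k ∈ D := by
  by_cases hki : k = i
  · exact hki ▸ hxi
  exact (hD.2 k hkF i hiF (hb k j i hkj hij.symm hki hEkj hEji)).resolve_right hyi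

end IsCoverOn

namespace IsMinCoverOn

variable {n : ℕ} {E : Fin n → Fin n → Prop} {F : Set (Fin n)} {C : Set (Fin n ⊕ Fin n)}

theorem exists_inl_notMem_of_inr_mem (hC : IsMinCoverOn n E F C) {i : Fin n}
    (hi : Sum.inr i ∈ C) : ∃ l ∈ F, E l i ∧ Sum.inl l ∉ C := by
  by_contra! h
  refine hC.2 _ (Set.sdiff_singleton_ssubset.2 hi) ⟨fun v hv => hC.1.1 v hv.1, ?_⟩
  intro k hk m hm hE
  by_cases hmi : m = i
  · subst hmi
    exact Or.inl ⟨h k hk hE, by simp⟩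
  · exact (hC.1.2 k hk m hm hE).imp (fun h => ⟨h, by simp⟩) (fun h => ⟨h, by simp [hmi]⟩)

theorem exists_inr_notMem_of_inl_mem (hC : IsMinCoverOn n E F C) {i : Fin n}
    (hi : Sum.inl i ∈ C) : ∃ m ∈ F, E i m ∧ Sum.inr m ∉ C := by
  by_contra! h
  refine hC.2 _ (Set.sdiff_singleton_ssubset.2 hi) ⟨fun v hv => hC.1.1 v hv.1, ?_⟩
  intro k hk m hm hE
  by_cases hki : k = i
  · subst hki
    exact Or.inr ⟨h m hm hE, by simp⟩
  · exact (hC.1.2 k hk m hm hE).imp (fun h => ⟨h, by simp [hki]⟩) (fun h => ⟨h, by simp⟩)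

theorem inr_notMem_of_inl_mem (ha : ∀ i, E i i)
    (hb : ∀ i j k : Fin n, i ≠ j → j ≠ k → i ≠ k → E i j → E j k → E i k)
    (hC : IsMinCoverOn n E F C) {i : Fin n} (hi : Sum.inl i ∈ C) : Sum.inr i ∉ C := by
  intro hri
  obtain ⟨l, hlF, hli, hl⟩ := hC.exists_inl_notMem_of_inr_mem hri
  obtain ⟨m, hmF, him, hm⟩ := hC.exists_inr_notMem_of_inl_mem hi
  have hlm : E l m := by
    by_cases hlm : l = m
    · exact hlm ▸ ha l
    · exact hb l i m (by rintro rfl; exact hl hi) (by rintro rfl; exact hm hri) hlm hli him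
  exact (hC.1.2 l hlF m hmF hlm).elim hl hm

end IsMinCoverOn

section DeleteVertex

variable {n : ℕ} {E : Fin n → Fin n → Prop} {i j : Fin n} {C : Set (Fin n ⊕ Fin n)}

theorem IsMinCoverOn.union_inl_univ (ha : ∀ i, E i i)
    (hb : ∀ i j k : Fin n, i ≠ j → j ≠ k → i ≠ k → E i j → E j k → E i k)
    (hij : i ≠ j) (hEji : E j i) (hC : ∀ v ∈ C, Sum.elim (· ≠ j) (· ≠ j) v)
    (hxi : Sum.inl i ∈ C) (hmin : IsMinCoverOn n E {k | k ≠ j} C) :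
    IsMinCoverOn n E Set.univ (C ∪ {Sum.inl j}) := by
  have hyi := hmin.inr_notMem_of_inl_mem ha hb hxi
  refine ⟨(IsCoverOn.union_inl_univ_iff hC).2 ⟨hmin.1, fun k hkj hEkj =>
    hmin.1.inl_mem_of_rel_of_rel hb hij hkj hij hkj hEkj hEji hxi hyi⟩, fun D hD hDcov => ?_⟩
  by_cases hjD : Sum.inl j ∈ D
  · have hjC : Sum.inl j ∉ C := fun h => hC _ h rfl
    rw [← Set.sdiff_union_of_subset (Set.singleton_subset_iff.2 hjD)] at hD hDcov
    have hD' := (Set.union_singleton_ssubset_union_singleton_iff (by simp) hjC).1 hD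
    rw [IsCoverOn.union_inl_univ_iff fun v hv => hC v (hD'.subset hv)] at hDcov
    exact hmin.2 _ hD' hDcov.1
  · rcases hDcov.2 j trivial i trivial hEji with h | h
    · exact hjD h
    · rcases hD.subset h with h | h
      · exact hyi h
      · simp at h

theorem IsMinCoverOn.of_union_inl_univ (ha : ∀ i, E i i)
    (hb : ∀ i j k : Fin n, i ≠ j → j ≠ k → i ≠ k → E i j → E j k → E i k)
    (hij : i ≠ j) (hEji : E j i) (hC : ∀ v ∈ C, Sum.elim (· ≠ j) (· ≠ j) v)
    (hxi : Sum.inl i ∈ C) (hmin : IsMinCoverOn n E Set.univ (C ∪ {Sum.inl j})) :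
    IsMinCoverOn n E {k | k ≠ j} C := by
  have hyi : Sum.inr i ∉ C := fun h => hmin.inr_notMem_of_inl_mem ha hb (Or.inl hxi) (Or.inl h)
  refine ⟨((IsCoverOn.union_inl_univ_iff hC).1 hmin.1).1, fun D hD hDcov => ?_⟩
  have hyiD : Sum.inr i ∉ D := fun h => hyi (hD.subset h)
  have hxiD : Sum.inl i ∈ D := (hDcov.2 i hij i hij (ha i)).resolve_right hyiD
  have hjC : Sum.inl j ∉ C := fun h => hC _ h rfl
  refine hmin.2 (D ∪ {Sum.inl j})
    ((Set.union_singleton_ssubset_union_singleton_iff (fun h => hjC (hD.subset h)) hjC).2 hD) ?_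
  exact (IsCoverOn.union_inl_univ_iff fun v hv => hC v (hD.subset hv)).2 ⟨hDcov, fun k hkj hEkj =>
    hDcov.inl_mem_of_rel_of_rel hb hij hkj hij hkj hEkj hEji hxiD hyiD⟩

end DeleteVertex

theorem stmt0_general (n : ℕ) (E : Fin n → Fin n → Prop)
    (ha : ∀ i, E i i)
    (hb : ∀ i j k : Fin n, i ≠ j → j ≠ k → i ≠ k → E i j → E j k → E i k)
    (i j : Fin n) (hij : i < j) (hEji : E j i)
    (C : Set (Fin n ⊕ Fin n))
    (hC : ∀ v ∈ C, Sum.elim (· ≠ j) (· ≠ j) v)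
    (hxi : Sum.inl i ∈ C) :
    IsMinCoverOn n E {k | k ≠ j} C ↔
      IsMinCoverOn n E Set.univ (C ∪ {Sum.inl j}) :=
  ⟨IsMinCoverOn.union_inl_univ ha hb hij.ne hEji hC hxi,
    IsMinCoverOn.of_union_inl_univ ha hb hij.ne hEji hC hxi⟩

/-- Lemma 1.2(i): with `K_{{i,j}}` an induced subgraph and `H` the induced
subgraph on the vertices other than `x j, y j`, for `C ⊆ V(H)` with `x i ∈ C`,
`C` is a minimal vertex cover of `H` iff `C ∪ {x j}` is one of `G`. -/
theorem stmt0 (n : ℕ) (hn : 2 ≤ n) (E : Fin n → Fin n → Prop)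
    (ha : ∀ i, E i i)
    (hb : ∀ i j k : Fin n, i ≠ j → j ≠ k → i ≠ k → E i j → E j k → E i k)
    (i j : Fin n) (hij : i < j) (hEij : E i j) (hEji : E j i)
    (C : Set (Fin n ⊕ Fin n))
    (hC : ∀ v ∈ C, Sum.elim (· ≠ j) (· ≠ j) v)
    (hxi : Sum.inl i ∈ C) :
    IsMinCoverOn n E {k | k ≠ j} C ↔
      IsMinCoverOn n E Set.univ (C ∪ {Sum.inl j}) :=
  stmt0_general n E ha hb i j hij hEji C hC hxi
end

section
/- Let G be an unmixed bipartite graph on {x_1,...,x_n} ∪ {y_1,...,y_n} with n ≥ 2, satisfying conditions (a) and (b), containing the complete bipartite graph K_{{i,j}} as an induced subgraph for some i < j. Let H be the induced subgraph on the vertices minus {x_j, y_j}. For any subset C of the vertices of H with x_i ∉ C: C is a minimal vertex cover of H if and only if C ∪ {y_j} is a minimal vertex cover of G. -/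
/-- Lemma 1.2(ii): for `C ⊆ V(H)` with `x i ∉ C`,
`C` is a minimal vertex cover of `H` iff `C ∪ {y j}` is one of `G`. -/
theorem stmt1 (n : ℕ) (hn : 2 ≤ n) (E : Fin n → Fin n → Prop)
    (ha : ∀ i, E i i)
    (hb : ∀ i j k : Fin n, i ≠ j → j ≠ k → i ≠ k → E i j → E j k → E i k)
    (i j : Fin n) (hij : i < j) (hEij : E i j) (hEji : E j i)
    (C : Set (Fin n ⊕ Fin n))
    (hC : ∀ v ∈ C, Sum.elim (· ≠ j) (· ≠ j) v)
    (hxi : Sum.inl i ∉ C) :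
    IsMinCoverOn n E {k | k ≠ j} C ↔
      IsMinCoverOn n E Set.univ (C ∪ {Sum.inr j}) := by
  have hij' : i ≠ j := ne_of_lt hij
  have hyjC : Sum.inr j ∉ C := fun h => (hC _ h) rfl
  -- Lemma A: a cover of H (not containing x i) extended by y j covers G.
  have lemA : ∀ D : Set (Fin n ⊕ Fin n), Sum.inl i ∉ D →
      IsCoverOn n E {k | k ≠ j} D → IsCoverOn n E Set.univ (D ∪ {Sum.inr j}) := by
    rintro D hxiD ⟨hDF, hDcov⟩
    refine ⟨fun v _ => ?_, fun a _ b _ hab => ?_⟩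
    · cases v <;> trivial
    · by_cases hbj : b = j
      · subst hbj; exact Or.inr (Or.inr rfl)
      · by_cases haj : a = j
        · subst haj
          by_cases hbi : b = i
          · rcases hDcov i hij' i hij' (ha i) with h | h
            · exact absurd h hxiD
            · exact Or.inr (Or.inl (by rw [hbi]; exact h))
          · have hEib : E i b := hb i a b hij' (Ne.symm hbj) (Ne.symm hbi) hEij hab
            rcases hDcov i hij' b hbj hEib with h | h
            · exact absurd h hxiD
            · exact Or.inr (Or.inl h)
        · rcases hDcov a haj b hbj hab with h | h
          · exact Or.inl (Or.inl h)
          · exact Or.inr (Or.inl h)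
  -- Lemma B: a cover of G contained in C ∪ {y j}, minus y j, covers H.
  have lemB : ∀ D : Set (Fin n ⊕ Fin n), D ⊆ C ∪ {Sum.inr j} →
      IsCoverOn n E Set.univ D → IsCoverOn n E {k | k ≠ j} (D \ {Sum.inr j}) := by
    rintro D hDsub ⟨_, hDcov⟩
    refine ⟨fun v hv => ?_, fun a haF b hbF hab => ?_⟩
    · rcases hDsub hv.1 with h | h
      · exact hC v h
      · exact absurd h hv.2
    · rcases hDcov a trivial b trivial hab with h | h
      · exact Or.inl ⟨h, by simp⟩
      · refine Or.inr ⟨h, ?_⟩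
        simp only [Set.mem_singleton_iff]
        exact fun hh => hbF (Sum.inr.inj hh)
  constructor
  · rintro ⟨hcov, hmin⟩
    refine ⟨lemA C hxi hcov, fun D hD hDcov => ?_⟩
    have hD' : D \ {Sum.inr j} ⊆ C := by
      intro v hv
      rcases hD.1 hv.1 with h | h
      · exact h
      · exact absurd h hv.2
    by_cases hyjD : Sum.inr j ∈ D
    · have hss : D \ {Sum.inr j} ⊂ C := by
        refine ⟨hD', fun hsub => hD.2 ?_⟩
        rintro v (hv | hv)
        · exact (hsub hv).1
        · exact hv ▸ hyjD
      exact hmin _ hss (lemB D hD.1 hDcov)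
    · rcases hDcov.2 i trivial j trivial hEij with h | h
      · rcases hD.1 h with h' | h'
        · exact hxi h'
        · exact Sum.inl_ne_inr h'
      · exact hyjD h
  · rintro ⟨hcovG, hminG⟩
    have hCeq : (C ∪ {Sum.inr j}) \ {Sum.inr j} = C := by
      ext v
      constructor
      · rintro ⟨h | h, hne⟩
        · exact h
        · exact absurd h hne
      · exact fun h => ⟨Or.inl h, fun hh => hyjC (hh ▸ h)⟩
    have hcovH : IsCoverOn n E {k | k ≠ j} C := by
      have := lemB (C ∪ {Sum.inr j}) subset_rfl hcovG
      rwa [hCeq] at this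
    refine ⟨hcovH, fun D hD hDcov => ?_⟩
    have hss : D ∪ {Sum.inr j} ⊂ C ∪ {Sum.inr j} := by
      refine ⟨Set.union_subset_union_left _ hD.1, fun hsub => hD.2 ?_⟩
      intro v hv
      rcases hsub (Or.inl hv) with h | h
      · exact h
      · exact absurd (h ▸ hv) (h ▸ hyjC)
    exact hminG _ hss (lemA D (fun h => hxi (hD.1 h)) hDcov)
end

section
/- Let G be a bipartite graph on {x_1,...,x_n} ∪ {y_1,...,y_n} satisfying: (a) {x_i,y_i} ∈ E(G) for all i, and (b) if {x_i,y_j} ∈ E(G) and {x_j,y_k} ∈ E(G) then {x_i,y_k} ∈ E(G) for distinct i,j,k. Then for any nonempty F ⊆ [n], the induced subgraph G_F on {x_i | i ∈ F} ∪ {y_i | i ∈ F} also satisfies (a) and (b) (with indices in F), and every minimal vertex cover of G_F has cardinality |F|. -/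
/-!
Deleting a vertex from a minimal cover `C` uncovers an edge, so if both `x i` and `y i` were
in `C` there would be edges `x i — y k` and `x j — y i` with `y k, x j ∉ C`. Condition (b)
(or (a) when `j = k`) then yields the edge `x j — y k`, which `C` misses. Hence `C` contains
exactly one of `x i, y i` for each `i ∈ F` (at least one by (a)), so `|C| = |F|`.
-/

variable {n : ℕ} {E : Fin n → Fin n → Prop} {F : Set (Fin n)} {C : Set (Fin n ⊕ Fin n)}

theorem ncard_coverSetOn {α : Set (Fin n)} (hα : α ⊆ F) : (coverSetOn n F α).ncard = F.ncard := by
  have hdisj : Disjoint (Sum.inl '' α) (Sum.inr '' (F \ α)) :=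
    Set.disjoint_left.2 fun _ ⟨_, _, hi⟩ ⟨_, _, hj⟩ => Sum.inr_ne_inl (hj.trans hi.symm)
  rw [coverSetOn, Set.ncard_union_eq hdisj, Set.ncard_image_of_injective _ Sum.inl_injective,
    Set.ncard_image_of_injective _ Sum.inr_injective, Set.ncard_sdiff hα,
    Nat.add_sub_cancel' (Set.ncard_le_ncard hα)]

theorem eq_coverSetOn_of_mem_inl_iff (hsub : ∀ v ∈ C, Sum.elim (· ∈ F) (· ∈ F) v)
    (hxor : ∀ i ∈ F, Sum.inl i ∈ C ↔ Sum.inr i ∉ C) :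
    C = coverSetOn n F (Sum.inl ⁻¹' C) := by
  ext (i | i)
  · simp [coverSetOn]
  · have hF : Sum.inr i ∈ C → i ∈ F := hsub (Sum.inr i)
    simp only [coverSetOn, Set.mem_union, Set.mem_image, Set.mem_preimage, Set.mem_sdiff,
      reduceCtorEq, and_false, exists_false, Sum.inr.injEq, exists_eq_right, false_or]
    have := hxor i
    tauto

namespace IsMinCoverOn

theorem exists_inr_notMem (hC : IsMinCoverOn n E F C) {i : Fin n} (hi : Sum.inl i ∈ C) :
    ∃ k ∈ F, E i k ∧ Sum.inr k ∉ C := by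
  by_contra! h
  refine hC.2 (C \ {Sum.inl i}) ⟨Set.sdiff_subset, fun hsub => (hsub hi).2 rfl⟩
    ⟨fun v hv => hC.1.1 v hv.1, fun j hj k hk hjk => ?_⟩
  rcases hC.1.2 j hj k hk hjk with hj' | hk'
  · by_cases hji : j = i
    · subst hji
      exact Or.inr ⟨h k hk hjk, by simp⟩
    · exact Or.inl ⟨hj', by simpa using hji⟩
  · exact Or.inr ⟨hk', by simp⟩

theorem exists_inl_notMem (hC : IsMinCoverOn n E F C) {i : Fin n} (hi : Sum.inr i ∈ C) :
    ∃ j ∈ F, E j i ∧ Sum.inl j ∉ C := by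
  by_contra! h
  refine hC.2 (C \ {Sum.inr i}) ⟨Set.sdiff_subset, fun hsub => (hsub hi).2 rfl⟩
    ⟨fun v hv => hC.1.1 v hv.1, fun j hj k hk hjk => ?_⟩
  rcases hC.1.2 j hj k hk hjk with hj' | hk'
  · exact Or.inl ⟨hj', by simp⟩
  · by_cases hki : k = i
    · subst hki
      exact Or.inl ⟨h j hj hjk, by simp⟩
    · exact Or.inr ⟨hk', by simpa using hki⟩

theorem not_inl_mem_and_inr_mem (ha : ∀ i, E i i)
    (hb : ∀ i j k : Fin n, i ≠ j → j ≠ k → i ≠ k → E i j → E j k → E i k)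
    (hC : IsMinCoverOn n E F C) (i : Fin n) : ¬(Sum.inl i ∈ C ∧ Sum.inr i ∈ C) := by
  rintro ⟨hl, hr⟩
  obtain ⟨k, hk, hik, hkC⟩ := hC.exists_inr_notMem hl
  obtain ⟨j, hj, hji, hjC⟩ := hC.exists_inl_notMem hr
  have hjk : E j k := by
    by_cases hjk : j = k
    · exact hjk ▸ ha j
    · exact hb j i k (by rintro rfl; exact hjC hl) (by rintro rfl; exact hkC hr) hjk hji hik
  exact (hC.1.2 j hj k hk hjk).elim hjC hkC

end IsMinCoverOn

theorem stmt2_general (n : ℕ) (E : Fin n → Fin n → Prop)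
    (ha : ∀ i, E i i)
    (hb : ∀ i j k : Fin n, i ≠ j → j ≠ k → i ≠ k → E i j → E j k → E i k)
    (F : Set (Fin n)) :
    (∀ i ∈ F, E i i) ∧
    (∀ i ∈ F, ∀ j ∈ F, ∀ k ∈ F, i ≠ j → j ≠ k → i ≠ k → E i j → E j k → E i k) ∧
    (∀ C : Set (Fin n ⊕ Fin n), IsMinCoverOn n E F C → C.ncard = F.ncard) := by
  refine ⟨fun i _ => ha i, fun i _ j _ k _ => hb i j k, fun C hC => ?_⟩
  have hxor : ∀ i ∈ F, Sum.inl i ∈ C ↔ Sum.inr i ∉ C := fun i hi =>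
    ⟨fun hl hr => hC.not_inl_mem_and_inr_mem ha hb i ⟨hl, hr⟩,
      (hC.1.2 i hi i hi (ha i)).resolve_right⟩
  rw [eq_coverSetOn_of_mem_inl_iff hC.1.1 hxor]
  exact ncard_coverSetOn fun i hi => hC.1.1 _ hi

/-- Remark 1.1: for `∅ ≠ F ⊆ [n]` the induced subgraph `G_F` again satisfies
conditions (a) and (b), and every minimal vertex cover of `G_F` has
cardinality `|F|`. -/
theorem stmt2 (n : ℕ) (E : Fin n → Fin n → Prop)
    (ha : ∀ i, E i i)
    (hb : ∀ i j k : Fin n, i ≠ j → j ≠ k → i ≠ k → E i j → E j k → E i k)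
    (F : Set (Fin n)) (hF : F.Nonempty) :
    (∀ i ∈ F, E i i) ∧
    (∀ i ∈ F, ∀ j ∈ F, ∀ k ∈ F, i ≠ j → j ≠ k → i ≠ k → E i j → E j k → E i k) ∧
    (∀ C : Set (Fin n ⊕ Fin n), IsMinCoverOn n E F C → C.ncard = F.ncard) :=
  stmt2_general n E ha hb F
end

section
/- Let G be an unmixed bipartite graph on {x_1,...,x_n} ∪ {y_1,...,y_n} satisfying conditions (a) and (b). Then every minimal vertex cover C of G satisfies |C ∩ {x_i, y_i}| = 1 for each i ∈ [n]; in particular every minimal vertex cover has cardinality exactly n. -/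
/-- Every minimal vertex cover `C` of an unmixed bipartite graph (conditions
(a), (b)) satisfies `|C ∩ {x i, y i}| = 1` for each `i`; in particular
`|C| = n`. -/
theorem stmt3 (n : ℕ) (E : Fin n → Fin n → Prop)
    (ha : ∀ i, E i i)
    (hb : ∀ i j k : Fin n, i ≠ j → j ≠ k → i ≠ k → E i j → E j k → E i k)
    (C : Set (Fin n ⊕ Fin n)) (hC : IsMinCoverOn n E Set.univ C) :
    (∀ i : Fin n, (C ∩ {Sum.inl i, Sum.inr i}).ncard = 1) ∧ C.ncard = n := by
  have hcov : ∀ i j, E i j → Sum.inl i ∈ C ∨ Sum.inr j ∈ C := fun i j h =>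
    hC.1.2 i (Set.mem_univ i) j (Set.mem_univ j) h
  -- at least one of the pair is in C
  have hone : ∀ i, Sum.inl i ∈ C ∨ Sum.inr i ∈ C := fun i => hcov i i (ha i)
  -- not both
  have hnotboth : ∀ i, ¬ (Sum.inl i ∈ C ∧ Sum.inr i ∈ C) := by
    rintro i ⟨hl, hr⟩
    -- removing inl i breaks cover: get j with E i j, inr j ∉ C
    have key : ∀ (v : Fin n ⊕ Fin n), v ∈ C →
        ∃ a b, E a b ∧ (Sum.inl a ∉ C ∨ Sum.inl a = v) ∧
          (Sum.inr b ∉ C ∨ Sum.inr b = v) := by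
      intro v hv
      have hsub : C \ {v} ⊂ C := Set.sdiff_singleton_ssubset.mpr hv
      have hnc := hC.2 _ hsub
      rw [IsCoverOn] at hnc
      push_neg at hnc
      have h1 : ∀ w ∈ C \ {v}, Sum.elim (· ∈ (Set.univ : Set (Fin n)))
          (· ∈ (Set.univ : Set (Fin n))) w := by
        rintro (w | w) _ <;> simp
      obtain ⟨a, -, b, -, hab, hna, hnb⟩ := hnc h1
      refine ⟨a, b, hab, ?_, ?_⟩
      · by_cases h : Sum.inl a ∈ C
        · right
          by_contra hne
          exact hna ⟨h, hne⟩
        · exact Or.inl h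
      · by_cases h : Sum.inr b ∈ C
        · right
          by_contra hne
          exact hnb ⟨h, hne⟩
        · exact Or.inl h
    obtain ⟨a, b, hab, ha', hb'⟩ := key _ hl
    obtain ⟨a', b', hab', ha'', hb''⟩ := key _ hr
    -- from hl-case: a = i (since inl a ∈ C or inl a = inl i), and inr b ∉ C
    have hai : a = i := by
      rcases ha' with h | h
      · rcases hb' with h2 | h2
        · exact absurd (hcov a b hab) (by tauto)
        · exact absurd h2 (by simp)
      · exact Sum.inl.injEq .. ▸ (by injection h)
    have hbC : Sum.inr b ∉ C := by
      rcases hb' with h | h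
      · exact h
      · exact absurd h (by simp)
    -- from hr-case: b' = i, inl a' ∉ C
    have hbi : b' = i := by
      rcases hb'' with h | h
      · rcases ha'' with h2 | h2
        · exact absurd (hcov a' b' hab') (by tauto)
        · exact absurd h2 (by simp)
      · injection h
    have haC : Sum.inl a' ∉ C := by
      rcases ha'' with h | h
      · exact h
      · exact absurd h (by simp)
    rw [hai] at hab
    rw [hbi] at hab'
    -- b ≠ i, a' ≠ i
    have hbne : b ≠ i := fun h => hbC (h ▸ hr)
    have hane : a' ≠ i := fun h => haC (h ▸ hl)
    by_cases hab2 : a' = b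
    · subst hab2
      rcases hcov a' a' (ha a') with h | h
      · exact haC h
      · exact hbC h
    · have : E a' b := hb a' i b hane hbne.symm hab2 hab' hab
      rcases hcov a' b this with h | h
      · exact haC h
      · exact hbC h
  -- exactly one: define choice function
  classical
  set g : Fin n → Fin n ⊕ Fin n := fun i =>
    if Sum.inl i ∈ C then Sum.inl i else Sum.inr i with hg
  have hgC : ∀ i, g i ∈ C := by
    intro i
    by_cases h : Sum.inl i ∈ C
    · simpa [hg, h] using h
    · have := (hone i).resolve_left h
      simpa [hg, h] using this
  have hgmem : ∀ i, g i = Sum.inl i ∨ g i = Sum.inr i := by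
    intro i; by_cases h : Sum.inl i ∈ C <;> simp [hg, h]
  have hCeq : ∀ i, C ∩ {Sum.inl i, Sum.inr i} = {g i} := by
    intro i
    ext v
    simp only [Set.mem_inter_iff, Set.mem_insert_iff, Set.mem_singleton_iff]
    constructor
    · rintro ⟨hvC, h | h⟩ <;> subst h
      · simp [hg, hvC]
      · by_cases h2 : Sum.inl i ∈ C
        · exact absurd ⟨h2, hvC⟩ (hnotboth i)
        · simp [hg, h2]
    · rintro rfl
      exact ⟨hgC i, by rcases hgmem i with h | h <;> simp [h]⟩
  have hginj : Function.Injective g := by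
    intro i j h
    rcases hgmem i with hi | hi <;> rcases hgmem j with hj | hj <;>
      rw [hi, hj] at h <;> first | (injection h) | simp_all
  have hCr : C = Set.range g := by
    ext v
    constructor
    · intro hv
      rcases v with i | i
      · exact ⟨i, by simp [hg, hv]⟩
      · refine ⟨i, ?_⟩
        by_cases h : Sum.inl i ∈ C
        · exact absurd ⟨h, hv⟩ (hnotboth i)
        · simp [hg, h]
    · rintro ⟨i, rfl⟩; exact hgC i
  constructor
  · intro i; rw [hCeq i]; exact Set.ncard_singleton _
  · rw [hCr, ← Set.image_univ, Set.ncard_image_of_injective _ hginj,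
      Set.ncard_univ, Nat.card_eq_fintype_card, Fintype.card_fin]
end

section
/- Let G be an unmixed bipartite graph on {x_1,...,x_n} ∪ {y_1,...,y_n} (satisfying conditions (a) and (b)) with n ≥ 2, containing K_{{i,j}} as an induced subgraph for some i < j, and let H be the induced subgraph on the vertices minus {x_j,y_j}. Then the map ν : L_H → L_G defined by ν(α) = α ∪ {p_j} if p_i ∈ α and ν(α) = α otherwise, is a lattice isomorphism (an order isomorphism preserving unions and intersections). -/
/-!
Because `E` is reflexive, a vertex set `coverSetOn F α` is a minimal vertex cover of `G_F`
exactly when `α` is closed under `E`-predecessors inside `F`: the edge `{x k, y k}` forces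
one of the two, and any edge `{x a, y b}` with `b ∈ α`, `a ∉ α` would be uncovered. Since
`E i j` and `E j i`, a closed set contains `i` iff it contains `j`, so `γ ↦ γ \ {j}` inverts
`ν`; transitivity of `E` is what makes `ν α` closed again.
-/

open Classical in
def extendBy {ι : Type*} (i j : ι) (s : Set ι) : Set ι :=
  if i ∈ s then s ∪ {j} else s

section extendBy

variable {ι : Type*} {i j : ι} {s t : Set ι}

theorem extendBy_of_mem (h : i ∈ s) : extendBy i j s = s ∪ {j} := if_pos h

theorem extendBy_of_notMem (h : i ∉ s) : extendBy i j s = s := if_neg h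

theorem extendBy_diff_singleton (hs : j ∉ s) : extendBy i j s \ {j} = s := by
  by_cases hi : i ∈ s
  · rw [extendBy_of_mem hi, Set.union_sdiff_right, Set.sdiff_singleton_eq_self hs]
  · rw [extendBy_of_notMem hi, Set.sdiff_singleton_eq_self hs]

theorem extendBy_diff_singleton_of_mem_iff (hij : i ≠ j) (h : i ∈ s ↔ j ∈ s) :
    extendBy i j (s \ {j}) = s := by
  by_cases hi : i ∈ s
  · rw [extendBy_of_mem (s := s \ {j}) ⟨hi, hij⟩, Set.sdiff_union_self,
      Set.union_eq_left.2 (Set.singleton_subset_iff.2 (h.1 hi))]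
  · rw [extendBy_of_notMem (fun h' => hi h'.1),
      Set.sdiff_singleton_eq_self (fun hj => hi (h.2 hj))]

theorem injOn_extendBy : Set.InjOn (extendBy i j) {s | j ∉ s} := fun s hs t ht hst => by
  rw [← extendBy_diff_singleton (i := i) hs, hst, extendBy_diff_singleton ht]

theorem extendBy_mono : Monotone (extendBy i j) := by
  intro s t hst
  by_cases hs : i ∈ s
  · rw [extendBy_of_mem hs, extendBy_of_mem (hst hs)]
    exact Set.union_subset_union_left _ hst
  · rw [extendBy_of_notMem hs]
    by_cases ht : i ∈ t
    · rw [extendBy_of_mem ht]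
      exact hst.trans Set.subset_union_left
    · rwa [extendBy_of_notMem ht]

theorem extendBy_subset_extendBy_iff (hs : j ∉ s) (ht : j ∉ t) :
    extendBy i j s ⊆ extendBy i j t ↔ s ⊆ t := by
  refine ⟨fun h => ?_, fun h => extendBy_mono h⟩
  rw [← extendBy_diff_singleton (i := i) hs, ← extendBy_diff_singleton (i := i) ht]
  exact Set.sdiff_subset_sdiff_left h

theorem extendBy_union : extendBy i j (s ∪ t) = extendBy i j s ∪ extendBy i j t := by
  by_cases hs : i ∈ s <;> by_cases ht : i ∈ t
  · rw [extendBy_of_mem (s := s ∪ t) (Or.inl hs), extendBy_of_mem hs, extendBy_of_mem ht,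
      Set.union_union_distrib_right]
  · rw [extendBy_of_mem (s := s ∪ t) (Or.inl hs), extendBy_of_mem hs, extendBy_of_notMem ht,
      Set.union_right_comm]
  · rw [extendBy_of_mem (s := s ∪ t) (Or.inr ht), extendBy_of_notMem hs, extendBy_of_mem ht,
      Set.union_assoc]
  · rw [extendBy_of_notMem (fun h => h.elim hs ht), extendBy_of_notMem hs,
      extendBy_of_notMem ht]

theorem extendBy_inter (hs : j ∉ s) (ht : j ∉ t) :
    extendBy i j (s ∩ t) = extendBy i j s ∩ extendBy i j t := by
  by_cases his : i ∈ s <;> by_cases hit : i ∈ t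
  · rw [extendBy_of_mem (s := s ∩ t) ⟨his, hit⟩, extendBy_of_mem his, extendBy_of_mem hit,
      Set.inter_union_distrib_right]
  · rw [extendBy_of_notMem (fun h => hit h.2), extendBy_of_mem his, extendBy_of_notMem hit,
      Set.union_inter_distrib_right, Set.singleton_inter_eq_empty.2 ht, Set.union_empty]
  · rw [extendBy_of_notMem (fun h => his h.1), extendBy_of_notMem his, extendBy_of_mem hit,
      Set.inter_union_distrib_left, Set.inter_singleton_eq_empty.2 hs, Set.union_empty]
  · rw [extendBy_of_notMem (fun h => his h.1), extendBy_of_notMem his,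
      extendBy_of_notMem hit]

end extendBy

section MinimalCovers

variable {n : ℕ} {E : Fin n → Fin n → Prop}

theorem mem_LGF_iff (ha : ∀ i, E i i) {F α : Set (Fin n)} :
    α ∈ LGF n E F ↔ α ⊆ F ∧ ∀ a ∈ F, ∀ b ∈ F, E a b → b ∈ α → a ∈ α := by
  simp only [LGF, IsMinCoverOn, IsCoverOn, coverSetOn, Set.mem_ofPred_eq]
  constructor
  · rintro ⟨hsub, ⟨-, hcov⟩, -⟩
    refine ⟨hsub, fun a haF b hbF hab hbα => ?_⟩
    rcases hcov a haF b hbF hab with h | h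
    · simpa using h
    · simp [hbα] at h
  · rintro ⟨hsub, hcl⟩
    refine ⟨hsub, ⟨?_, fun a haF b hbF hab => ?_⟩, ?_⟩
    · rintro v (⟨k, hk, rfl⟩ | ⟨k, hk, rfl⟩)
      exacts [hsub hk, hk.1]
    · by_cases hbα : b ∈ α
      · exact Or.inl (Or.inl ⟨a, hcl a haF b hbF hab hbα, rfl⟩)
      · exact Or.inr (Or.inr ⟨b, ⟨hbF, hbα⟩, rfl⟩)
    -- removing `x k` or `y k` from the cover uncovers the edge `{x k, y k}`
    · rintro D hD ⟨-, hDcov⟩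
      obtain ⟨v, hvC, hvD⟩ := Set.exists_of_ssubset hD
      rcases hvC with ⟨k, hk, rfl⟩ | ⟨k, ⟨hkF, hkα⟩, rfl⟩
      · rcases hDcov k (hsub hk) k (hsub hk) (ha k) with h | h
        · exact hvD h
        · simpa [hk] using hD.1 h
      · rcases hDcov k hkF k hkF (ha k) with h | h
        · simpa [hkα] using hD.1 h
        · exact hvD h

theorem mem_LGF_compl_singleton_iff (ha : ∀ i, E i i) {j : Fin n} {α : Set (Fin n)} :
    α ∈ LGF n E {k | k ≠ j} ↔
      j ∉ α ∧ ∀ a b, a ≠ j → b ≠ j → E a b → b ∈ α → a ∈ α := by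
  rw [mem_LGF_iff ha]
  exact and_congr ⟨fun h hj => h hj rfl, fun h k hk hkj => h (hkj ▸ hk)⟩
    ⟨fun h a b haj hbj => h a haj b hbj, fun h a haj b hbj => h a b haj hbj⟩

theorem mem_LGF_univ_iff (ha : ∀ i, E i i) {α : Set (Fin n)} :
    α ∈ LGF n E Set.univ ↔ ∀ a b, E a b → b ∈ α → a ∈ α := by
  simp [mem_LGF_iff ha]

theorem extendBy_mem_LGF_univ (ha : ∀ i, E i i)
    (hb : ∀ i j k : Fin n, i ≠ j → j ≠ k → i ≠ k → E i j → E j k → E i k)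
    {i j : Fin n} (hij : i ≠ j) (hEij : E i j) (hEji : E j i) {α : Set (Fin n)}
    (hα : α ∈ LGF n E {k | k ≠ j}) : extendBy i j α ∈ LGF n E Set.univ := by
  obtain ⟨hjα, hcl⟩ := (mem_LGF_compl_singleton_iff ha).1 hα
  rw [mem_LGF_univ_iff ha]
  intro a c hac hc
  by_cases hiα : i ∈ α
  · rw [extendBy_of_mem hiα] at hc ⊢
    by_cases haj : a = j
    · exact Or.inr haj
    left
    rcases hc with hc | rfl
    · exact hcl a c haj (ne_of_mem_of_not_mem hc hjα) hac hc
    · by_cases hai : a = i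
      · exact hai ▸ hiα
      · exact hcl a i haj hij (hb a c i haj hij.symm hai hac hEji) hiα
  · rw [extendBy_of_notMem hiα] at hc ⊢
    have hcj : c ≠ j := ne_of_mem_of_not_mem hc hjα
    rcases eq_or_ne a j with rfl | haj
    · have hci : c ≠ i := ne_of_mem_of_not_mem hc hiα
      exact absurd (hcl i c hij hcj (hb i a c hij hcj.symm hci.symm hEij hac) hc) hiα
    · exact hcl a c haj hcj hac hc

theorem diff_singleton_mem_LGF_compl_singleton (ha : ∀ i, E i i) {j : Fin n}
    {γ : Set (Fin n)} (hγ : γ ∈ LGF n E Set.univ) : γ \ {j} ∈ LGF n E {k | k ≠ j} := by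
  have hcl := (mem_LGF_univ_iff ha).1 hγ
  exact (mem_LGF_compl_singleton_iff ha).2
    ⟨fun h => h.2 rfl, fun a c haj _ hac hc => ⟨hcl a c hac hc.1, haj⟩⟩

theorem mem_iff_mem_of_mem_LGF_univ (ha : ∀ i, E i i) {i j : Fin n} (hEij : E i j)
    (hEji : E j i) {γ : Set (Fin n)} (hγ : γ ∈ LGF n E Set.univ) : i ∈ γ ↔ j ∈ γ :=
  have hcl := (mem_LGF_univ_iff ha).1 hγ
  ⟨hcl j i hEji, hcl i j hEij⟩

end MinimalCovers

open Classical in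
theorem stmt5_general (n : ℕ) (E : Fin n → Fin n → Prop)
    (ha : ∀ i, E i i)
    (hb : ∀ i j k : Fin n, i ≠ j → j ≠ k → i ≠ k → E i j → E j k → E i k)
    (i j : Fin n) (hij : i < j) (hEij : E i j) (hEji : E j i) :
    let LH := LGF n E {k | k ≠ j}
    let LG := LGF n E Set.univ
    let ν : Set (Fin n) → Set (Fin n) := fun α => if i ∈ α then α ∪ {j} else α
    Set.BijOn ν LH LG ∧
    (∀ α ∈ LH, ∀ β ∈ LH, (α ⊆ β ↔ ν α ⊆ ν β)) ∧
    (∀ α ∈ LH, ∀ β ∈ LH, ν (α ∪ β) = ν α ∪ ν β ∧ ν (α ∩ β) = ν α ∩ ν β) := by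
  intro LH LG ν
  have hj : ∀ α ∈ LH, j ∉ α := fun α hα => ((mem_LGF_compl_singleton_iff ha).1 hα).1
  refine ⟨⟨fun α hα => extendBy_mem_LGF_univ ha hb hij.ne hEij hEji hα,
      injOn_extendBy.mono hj, fun γ hγ => ⟨γ \ {j}, ?_, ?_⟩⟩,
    fun α hα β hβ => (extendBy_subset_extendBy_iff (hj α hα) (hj β hβ)).symm,
    fun α hα β hβ => ⟨extendBy_union, extendBy_inter (hj α hα) (hj β hβ)⟩⟩
  · exact diff_singleton_mem_LGF_compl_singleton ha hγ
  · exact extendBy_diff_singleton_of_mem_iff hij.ne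
      (mem_iff_mem_of_mem_LGF_univ ha hEij hEji hγ)

open Classical in
/-- Corollary 1.3: with `K_{{i,j}}` an induced subgraph of `G` and `H` the
induced subgraph on the vertices other than `x j, y j`, the map
`ν(α) = α ∪ {p j}` if `p i ∈ α`, `ν(α) = α` otherwise, is a lattice
isomorphism `L_H ≃ L_G`. -/
theorem stmt5 (n : ℕ) (hn : 2 ≤ n) (E : Fin n → Fin n → Prop)
    (ha : ∀ i, E i i)
    (hb : ∀ i j k : Fin n, i ≠ j → j ≠ k → i ≠ k → E i j → E j k → E i k)
    (i j : Fin n) (hij : i < j) (hEij : E i j) (hEji : E j i) :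
    let LH := LGF n E {k | k ≠ j}
    let LG := LGF n E Set.univ
    let ν : Set (Fin n) → Set (Fin n) := fun α => if i ∈ α then α ∪ {j} else α
    Set.BijOn ν LH LG ∧
    (∀ α ∈ LH, ∀ β ∈ LH, (α ⊆ β ↔ ν α ⊆ ν β)) ∧
    (∀ α ∈ LH, ∀ β ∈ LH, ν (α ∪ β) = ν α ∪ ν β ∧ ν (α ∩ β) = ν α ∩ ν β) :=
  stmt5_general n E ha hb i j hij hEij hEji
end

section
/- Let G be an unmixed bipartite graph on {x_1,...,x_n} ∪ {y_1,...,y_n} without isolated vertices. Then the multiplicity of its vertex cover algebra satisfies e(A(G)) ≥ n+1, with equality if and only if G = K_{n,n}. Equivalently, in terms of the lattice formulation: e(A(G)) = n + 1 + Σ_{F ⊆ [n], rank(L_{G_F}) = |F| ≥ 2} f^F_{|F|}, where f^F_{|F|} is the number of maximal chains of length |F| in L_{G_F}, and this quantity equals n+1 iff rank(L_{G_F}) < |F| for all F with |F| ≥ 2, iff G = K_{n,n}. -/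
/-- The set of maximal chains of the lattice `L_{G_F}`. -/
def MaxChains (n : ℕ) (E : Fin n → Fin n → Prop) (F : Set (Fin n)) :
    Set (Set (Set (Fin n))) :=
  {c | c ⊆ LGF n E F ∧ IsChain (· ⊆ ·) c ∧
    ∀ c', c' ⊆ LGF n E F → IsChain (· ⊆ ·) c' → c ⊆ c' → c' = c}

/-- The multiplicity `e(A(G)) = Σ_{F ⊆ [n], rank L_{G_F} = |F|} f^F_{|F|}`,
expressed as the total number, over all `F ⊆ [n]`, of maximal chains of
`L_{G_F}` with `|F| + 1` elements (length `|F|`); `F = ∅` contributes `1`. -/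
noncomputable def mult (n : ℕ) (E : Fin n → Fin n → Prop) : ℕ :=
  ∑ F : Finset (Fin n),
    {c ∈ MaxChains n E (↑F : Set (Fin n)) | c.ncard = F.card + 1}.ncard

section Aux

variable {n : ℕ} {E : Fin n → Fin n → Prop}

lemma mem_coverSetOn_inl {F α : Set (Fin n)} {i : Fin n} :
    Sum.inl i ∈ coverSetOn n F α ↔ i ∈ α := by simp [coverSetOn]

lemma mem_coverSetOn_inr {F α : Set (Fin n)} {j : Fin n} :
    Sum.inr j ∈ coverSetOn n F α ↔ j ∈ F \ α := by simp [coverSetOn]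

/-- The lattice `L_{G_F}` is exactly the family of "closed" subsets of `F`. -/
lemma mem_LGF (ha : ∀ i, E i i) {F α : Set (Fin n)} :
    α ∈ LGF n E F ↔ α ⊆ F ∧ ∀ i ∈ F, ∀ j ∈ F, E i j → j ∈ α → i ∈ α := by
  simp only [LGF, Set.mem_setOf_eq]
  constructor
  · rintro ⟨hsub, ⟨⟨h1, h2⟩, _⟩⟩
    refine ⟨hsub, fun i hi j hj hij hjα => ?_⟩
    rcases h2 i hi j hj hij with h | h
    · exact mem_coverSetOn_inl.mp h
    · exact absurd hjα (mem_coverSetOn_inr.mp h).2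
  · rintro ⟨hsub, hcl⟩
    refine ⟨hsub, ⟨⟨?_, ?_⟩, ?_⟩⟩
    · rintro (i | j) hv
      · exact hsub (mem_coverSetOn_inl.mp hv)
      · exact (mem_coverSetOn_inr.mp hv).1
    · intro i hi j hj hij
      by_cases hj' : j ∈ α
      · exact Or.inl (mem_coverSetOn_inl.mpr (hcl i hi j hj hij hj'))
      · exact Or.inr (mem_coverSetOn_inr.mpr ⟨hj, hj'⟩)
    · rintro D hD ⟨_, hDcov⟩
      obtain ⟨v, hvC, hvD⟩ := Set.exists_of_ssubset hD
      rcases v with i | j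
      · have hiα : i ∈ α := mem_coverSetOn_inl.mp hvC
        rcases hDcov i (hsub hiα) i (hsub hiα) (ha i) with h | h
        · exact hvD h
        · exact (mem_coverSetOn_inr.mp (hD.subset h)).2 hiα
      · have hj : j ∈ F \ α := mem_coverSetOn_inr.mp hvC
        rcases hDcov j hj.1 j hj.1 (ha j) with h | h
        · exact hj.2 (mem_coverSetOn_inl.mp (hD.subset h))
        · exact hvD h

/-- A chain of subsets of `S` has at most `S.ncard + 1` elements. -/
lemma chain_card_bound {c : Set (Set (Fin n))} (hc : IsChain (· ⊆ ·) c)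
    {S : Set (Fin n)} (hsub : ∀ α ∈ c, α ⊆ S) : c.ncard ≤ S.ncard + 1 := by
  have h : c.ncard ≤ (Set.Iic S.ncard).ncard := by
    apply Set.ncard_le_ncard_of_injOn (fun α => α.ncard)
    · intro α hα; exact Set.ncard_le_ncard (hsub α hα) (Set.toFinite S)
    · intro α hα β hβ hab
      by_contra hne
      rcases hc hα hβ hne with h' | h'
      · exact hne (Set.eq_of_subset_of_ncard_le h' hab.ge)
      · exact hne (Set.eq_of_subset_of_ncard_le h' hab.le).symm
  rwa [← Finset.coe_Iic, Set.ncard_coe_finset, Nat.card_Iic] at h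

/-- If the preorder is antisymmetric on `F`, a minimal element of `F` exists. -/
lemma exists_bot (F : Finset (Fin n)) (hne : F.Nonempty)
    (ha : ∀ i, E i i) (htr : ∀ i j k : Fin n, E i j → E j k → E i k)
    (hanti : ∀ i ∈ F, ∀ j ∈ F, E i j → E j i → i = j) :
    ∃ m ∈ F, ∀ j ∈ F, E m j → j = m := by
  classical
  obtain ⟨m, hm, hmin⟩ := F.exists_min_image (fun i => (F.filter (fun j => E i j)).card) hne
  refine ⟨m, hm, fun j hj hmj => ?_⟩
  by_contra hjm
  have hsub1 : F.filter (fun k => E j k) ⊆ F.filter (fun k => E m k) := by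
    intro k hk
    rw [Finset.mem_filter] at hk ⊢
    exact ⟨hk.1, htr m j k hmj hk.2⟩
  have hss : F.filter (fun k => E j k) ⊂ F.filter (fun k => E m k) := by
    rw [Finset.ssubset_iff_of_subset hsub1]
    refine ⟨m, Finset.mem_filter.mpr ⟨hm, ha m⟩, ?_⟩
    intro hmem
    exact hjm (hanti j hj m hm (Finset.mem_filter.mp hmem).2 hmj)
  have h1 := Finset.card_lt_card hss
  have h2 := hmin j hj
  omega

/-- If the preorder is antisymmetric on `F` then `L_{G_F}` contains a chain
with `|F| + 1` elements. -/
lemma exists_full_chain (ha : ∀ i, E i i) (htr : ∀ i j k : Fin n, E i j → E j k → E i k) :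
    ∀ F : Finset (Fin n), (∀ i ∈ F, ∀ j ∈ F, E i j → E j i → i = j) →
    ∃ c : Set (Set (Fin n)), c ⊆ LGF n E ↑F ∧ IsChain (· ⊆ ·) c ∧ c.ncard = F.card + 1 := by
  intro F
  induction F using Finset.strongInduction with
  | _ F ih =>
    intro hanti
    rcases F.eq_empty_or_nonempty with rfl | hne
    · refine ⟨{∅}, ?_, Set.subsingleton_singleton.isChain, by simp⟩
      intro α hα
      rw [Set.mem_singleton_iff] at hα
      subst hα
      rw [mem_LGF ha]
      constructor
      · simp
      · intro i hi
        simp at hi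
    · obtain ⟨m, hmF, hm⟩ := exists_bot F hne ha htr hanti
      have hssub : F.erase m ⊂ F := Finset.erase_ssubset hmF
      obtain ⟨c', hc1, hc2, hc3⟩ := ih (F.erase m) hssub
        (fun i hi j hj => hanti i (Finset.mem_of_mem_erase hi) j (Finset.mem_of_mem_erase hj))
      have hc1F : ∀ α ∈ c', α ⊆ (↑(F.erase m) : Set (Fin n)) :=
        fun α hα => ((mem_LGF ha).mp (hc1 hα)).1
      have hFnotmem : (↑F : Set (Fin n)) ∉ c' := by
        intro h
        have := hc1F _ h (Finset.mem_coe.mpr hmF)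
        rw [Finset.mem_coe, Finset.mem_erase] at this
        exact this.1 rfl
      refine ⟨insert (↑F) c', ?_, ?_, ?_⟩
      · intro α hα
        rcases Set.mem_insert_iff.mp hα with rfl | hα
        · rw [mem_LGF ha]
          exact ⟨subset_rfl, fun i hi j hj _ _ => hi⟩
        · obtain ⟨hαsub, hcl⟩ := (mem_LGF ha).mp (hc1 hα)
          rw [mem_LGF ha]
          have herase : (↑(F.erase m) : Set (Fin n)) ⊆ (↑F : Set (Fin n)) :=
            Finset.coe_subset.mpr (Finset.erase_subset m F)
          refine ⟨hαsub.trans herase, ?_⟩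
          intro i hi j hj hij hjα
          have hjF' : j ∈ (↑(F.erase m) : Set (Fin n)) := hαsub hjα
          have hjne : j ≠ m := (Finset.mem_erase.mp (Finset.mem_coe.mp hjF')).1
          by_cases him : i = m
          · subst him
            exact absurd (hm j (Finset.mem_coe.mp hj) hij) hjne
          · exact hcl i (Finset.mem_coe.mpr (Finset.mem_erase.mpr ⟨him, Finset.mem_coe.mp hi⟩))
              j hjF' hij hjα
      · refine hc2.insert ?_
        intro β hβ _
        exact Or.inr ((hc1F β hβ).trans (Finset.coe_subset.mpr (Finset.erase_subset m F)))
      · rw [Set.ncard_insert_of_notMem hFnotmem (Set.toFinite c'), hc3,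
          Finset.card_erase_of_mem hmF]
        have : 1 ≤ F.card := Finset.card_pos.mpr hne
        omega

/-- A chain in `L_{G_F}` with `|F| + 1` elements is automatically maximal. -/
lemma full_mem (ha : ∀ i, E i i) (F : Finset (Fin n)) {c : Set (Set (Fin n))}
    (h1 : c ⊆ LGF n E ↑F) (h2 : IsChain (· ⊆ ·) c) (h3 : c.ncard = F.card + 1) :
    c ∈ {c ∈ MaxChains n E (↑F : Set (Fin n)) | c.ncard = F.card + 1} := by
  refine ⟨⟨h1, h2, fun c' hc1' hc2' hcc' => ?_⟩, h3⟩
  have hle : c'.ncard ≤ F.card + 1 := by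
    have h := chain_card_bound hc2' (S := (↑F : Set (Fin n)))
      (fun α hα => ((mem_LGF ha).mp (hc1' hα)).1)
    rwa [Set.ncard_coe_finset] at h
  exact (Set.eq_of_subset_of_ncard_le hcc' (by omega)).symm

/-- If antisymmetry fails on `F`, there is no maximal chain with `|F| + 1` elements. -/
lemma no_full (ha : ∀ i, E i i) {F : Finset (Fin n)} {i j : Fin n} (hi : i ∈ F) (hj : j ∈ F)
    (hne : i ≠ j) (hij : E i j) (hji : E j i) :
    {c ∈ MaxChains n E (↑F : Set (Fin n)) | c.ncard = F.card + 1} = ∅ := by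
  rw [Set.eq_empty_iff_forall_notMem]
  rintro c ⟨⟨hc1, hc2, -⟩, hcard⟩
  have key : ∀ α ∈ c, ∀ β ∈ c, α ⊆ β → α \ {j} = β \ {j} → α = β := by
    intro α hα β hβ hab hd
    refine hab.antisymm ?_
    intro x hx
    by_cases hxj : x = j
    · subst hxj
      by_contra hxα
      have hclβ := ((mem_LGF ha).mp (hc1 hβ)).2
      have hclα := ((mem_LGF ha).mp (hc1 hα)).2
      have hiβ : i ∈ β := hclβ i (Finset.mem_coe.mpr hi) x (Finset.mem_coe.mpr hj) hij hx
      have hiα : i ∈ α := by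
        have hmem : i ∈ β \ {x} := ⟨hiβ, by simpa using hne⟩
        rw [← hd] at hmem
        exact hmem.1
      exact hxα (hclα x (Finset.mem_coe.mpr hj) i (Finset.mem_coe.mpr hi) hji hiα)
    · have hmem : x ∈ β \ {j} := ⟨hx, by simpa using hxj⟩
      rw [← hd] at hmem
      exact hmem.1
  have hinj : Set.InjOn (fun α => α \ {j}) c := by
    intro α hα β hβ hd
    by_cases h : α = β
    · exact h
    rcases hc2 hα hβ h with h' | h'
    · exact key α hα β hβ h' hd
    · exact (key β hβ α hα h' hd.symm).symm
  have himg : ((fun α => α \ {j}) '' c).ncard = c.ncard := Set.ncard_image_of_injOn hinj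
  have hchain : IsChain (· ⊆ ·) ((fun α => α \ {j}) '' c) := by
    rintro _ ⟨α, hα, rfl⟩ _ ⟨β, hβ, rfl⟩ hne'
    have h : α ≠ β := fun h => hne' (by rw [h])
    rcases hc2 hα hβ h with h' | h'
    · exact Or.inl (Set.diff_subset_diff_left h')
    · exact Or.inr (Set.diff_subset_diff_left h')
  have hbound := chain_card_bound hchain (S := (↑F : Set (Fin n)) \ {j})
    (by rintro _ ⟨α, hα, rfl⟩; exact Set.diff_subset_diff_left ((mem_LGF ha).mp (hc1 hα)).1)
  have hS : ((↑F : Set (Fin n)) \ {j}).ncard = F.card - 1 := by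
    classical
    rw [← Finset.coe_singleton, ← Finset.coe_sdiff, Set.ncard_coe_finset,
      Finset.sdiff_singleton_eq_erase, Finset.card_erase_of_mem hj]
  have hcardF : 1 ≤ F.card := Finset.card_pos.mpr ⟨j, hj⟩
  omega

/-- For `|F| ≤ 1` there is exactly one maximal chain of length `|F|`. -/
lemma count_small (ha : ∀ i, E i i) {F : Finset (Fin n)} (hF : F.card ≤ 1) :
    {c ∈ MaxChains n E (↑F : Set (Fin n)) | c.ncard = F.card + 1}.ncard = 1 := by
  have hLGF : LGF n E ↑F = {α | α ⊆ (↑F : Set (Fin n))} := by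
    ext α
    rw [mem_LGF ha]
    simp only [Set.mem_setOf_eq]
    constructor
    · exact fun h => h.1
    · intro h
      refine ⟨h, fun i hi j hj hij hjα => ?_⟩
      have hij' : i = j :=
        Finset.card_le_one.mp hF i (Finset.mem_coe.mp hi) j (Finset.mem_coe.mp hj)
      rw [hij']; exact hjα
  set P : Set (Set (Fin n)) := {α | α ⊆ (↑F : Set (Fin n))} with hPdef
  have hP : IsChain (· ⊆ ·) P ∧ P.ncard = F.card + 1 := by
    rcases Nat.le_one_iff_eq_zero_or_eq_one.mp hF with h0 | h1
    · obtain rfl := Finset.card_eq_zero.mp h0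
      have hPeq : P = {(∅ : Set (Fin n))} := by
        ext α; simp [hPdef, Set.subset_empty_iff]
      rw [hPeq]
      exact ⟨Set.subsingleton_singleton.isChain, by simp [h0]⟩
    · obtain ⟨a, rfl⟩ := Finset.card_eq_one.mp h1
      have hPeq : P = {(∅ : Set (Fin n)), {a}} := by
        ext α
        simp only [hPdef, Set.mem_setOf_eq, Finset.coe_singleton,
          Set.subset_singleton_iff_eq, Set.mem_insert_iff, Set.mem_singleton_iff]
      rw [hPeq]
      constructor
      · rintro α hα β hβ hne
        rcases hα with rfl | rfl
        · exact Or.inl (Set.empty_subset _)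
        · rcases hβ with rfl | rfl
          · exact Or.inr (Set.empty_subset _)
          · exact absurd rfl hne
      · rw [Set.ncard_pair (Set.singleton_ne_empty a).symm, h1]
  have hPmem : P ∈ {c ∈ MaxChains n E (↑F : Set (Fin n)) | c.ncard = F.card + 1} := by
    refine ⟨⟨?_, hP.1, ?_⟩, hP.2⟩
    · rw [hLGF]
    · intro c' hc1' _ hPc'
      rw [hLGF] at hc1'
      exact Set.Subset.antisymm hc1' hPc'
  have hset : {c ∈ MaxChains n E (↑F : Set (Fin n)) | c.ncard = F.card + 1} = {P} := by
    apply Set.eq_singleton_iff_unique_mem.mpr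
    refine ⟨hPmem, ?_⟩
    rintro c ⟨⟨hc1, hc2, hmax⟩, hcard⟩
    rw [hLGF] at hc1
    exact Set.eq_of_subset_of_ncard_le hc1 (by rw [hP.2, hcard])
  rw [hset, Set.ncard_singleton]

end Aux

/-- Corollary 3.6 (lower bound): `e(A(G)) ≥ n + 1`, with
`e(A(G)) = n + 1 + Σ_{F, |F| ≥ 2} f^F_{|F|}`, and equality holds iff
`G = K_{n,n}` (all edges `{x i, y j}` present) iff `rank L_{G_F} < |F|` for
all `F` with `|F| ≥ 2` (no maximal chain of `L_{G_F}` has length `|F|`). -/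
theorem stmt13 (n : ℕ) (hn : 1 ≤ n) (E : Fin n → Fin n → Prop)
    (ha : ∀ i, E i i)
    (hb : ∀ i j k : Fin n, i ≠ j → j ≠ k → i ≠ k → E i j → E j k → E i k) :
    n + 1 ≤ mult n E ∧
    mult n E = n + 1 + ∑ F ∈ Finset.univ.filter (fun F : Finset (Fin n) => 2 ≤ F.card),
      {c ∈ MaxChains n E (↑F : Set (Fin n)) | c.ncard = F.card + 1}.ncard ∧
    (mult n E = n + 1 ↔ ∀ i j : Fin n, E i j) ∧
    (mult n E = n + 1 ↔ ∀ F : Finset (Fin n), 2 ≤ F.card →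
      {c ∈ MaxChains n E (↑F : Set (Fin n)) | c.ncard = F.card + 1} = ∅) := by
  classical
  haveI : Nonempty (Fin n) := ⟨⟨0, hn⟩⟩
  have htr : ∀ i j k : Fin n, E i j → E j k → E i k := by
    intro i j k hij hjk
    by_cases h1 : i = j; · subst h1; exact hjk
    by_cases h2 : j = k; · subst h2; exact hij
    by_cases h3 : i = k; · subst h3; exact ha i
    exact hb i j k h1 h2 h3 hij hjk
  set f : Finset (Fin n) → ℕ :=
    fun F => {c ∈ MaxChains n E (↑F : Set (Fin n)) | c.ncard = F.card + 1}.ncard with hf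
  have hmult : mult n E = ∑ F : Finset (Fin n), f F := rfl
  have hsplit : ∑ F : Finset (Fin n), f F
      = (∑ F ∈ Finset.univ.filter (fun F : Finset (Fin n) => ¬ 2 ≤ F.card), f F)
      + (∑ F ∈ Finset.univ.filter (fun F : Finset (Fin n) => 2 ≤ F.card), f F) := by
    rw [add_comm]
    exact (Finset.sum_filter_add_sum_filter_not Finset.univ _ f).symm
  have hsmall : ∑ F ∈ Finset.univ.filter (fun F : Finset (Fin n) => ¬ 2 ≤ F.card), f F
      = n + 1 := by
    have h1 : ∀ F ∈ Finset.univ.filter (fun F : Finset (Fin n) => ¬ 2 ≤ F.card), f F = 1 := by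
      intro F hF
      simp only [Finset.mem_filter, Finset.mem_univ, true_and] at hF
      exact count_small ha (by omega)
    rw [Finset.sum_congr rfl h1, Finset.sum_const, smul_eq_mul, mul_one]
    have heq : Finset.univ.filter (fun F : Finset (Fin n) => ¬ 2 ≤ F.card)
        = insert (∅ : Finset (Fin n)) (Finset.univ.image fun i : Fin n => ({i} : Finset (Fin n))) := by
      ext F
      simp only [Finset.mem_filter, Finset.mem_univ, true_and, Finset.mem_insert,
        Finset.mem_image]
      constructor
      · intro h
        have hle : F.card ≤ 1 := by omega
        obtain ⟨x, hx⟩ := Finset.card_le_one_iff_subset_singleton.mp hle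
        rcases Finset.subset_singleton_iff.mp hx with h' | h'
        · exact Or.inl h'
        · exact Or.inr ⟨x, h'.symm⟩
      · rintro (rfl | ⟨i, rfl⟩) <;> simp
    rw [heq, Finset.card_insert_of_notMem (by simp),
      Finset.card_image_of_injective _ Finset.singleton_injective, Finset.card_univ,
      Fintype.card_fin]
  have part2 : mult n E = n + 1 +
      ∑ F ∈ Finset.univ.filter (fun F : Finset (Fin n) => 2 ≤ F.card), f F := by
    rw [hmult, hsplit, hsmall]
  have hiff0 : mult n E = n + 1 ↔
      (∑ F ∈ Finset.univ.filter (fun F : Finset (Fin n) => 2 ≤ F.card), f F) = 0 := by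
    rw [part2]; omega
  have hiffempty : (∑ F ∈ Finset.univ.filter (fun F : Finset (Fin n) => 2 ≤ F.card), f F) = 0
      ↔ ∀ F : Finset (Fin n), 2 ≤ F.card →
        {c ∈ MaxChains n E (↑F : Set (Fin n)) | c.ncard = F.card + 1} = ∅ := by
    constructor
    · intro hR F hF2
      have h := (Finset.sum_eq_zero_iff.mp hR) F
        (Finset.mem_filter.mpr ⟨Finset.mem_univ F, hF2⟩)
      exact (Set.ncard_eq_zero (Set.toFinite _)).mp h
    · intro h
      apply Finset.sum_eq_zero
      intro F hF
      rw [hf]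
      simp only []
      rw [h F (Finset.mem_filter.mp hF).2]
      exact Set.ncard_empty _
  have hiffE : (∀ F : Finset (Fin n), 2 ≤ F.card →
      {c ∈ MaxChains n E (↑F : Set (Fin n)) | c.ncard = F.card + 1} = ∅)
      ↔ ∀ i j : Fin n, E i j := by
    constructor
    · intro h i j
      by_cases hne : i = j
      · rw [hne]; exact ha j
      by_contra hEij
      have hanti : ∀ a ∈ ({i, j} : Finset (Fin n)), ∀ b ∈ ({i, j} : Finset (Fin n)),
          E a b → E b a → a = b := by
        intro a haa b hbb hab hba
        rcases Finset.mem_insert.mp haa with rfl | haa'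
        · rcases Finset.mem_insert.mp hbb with rfl | hbb'
          · rfl
          · rw [Finset.mem_singleton] at hbb'
            subst hbb'
            exact absurd hab hEij
        · rw [Finset.mem_singleton] at haa'
          subst haa'
          rcases Finset.mem_insert.mp hbb with rfl | hbb'
          · exact absurd hba hEij
          · rw [Finset.mem_singleton] at hbb'
            rw [hbb']
      obtain ⟨c, hc1, hc2, hc3⟩ := exists_full_chain ha htr {i, j} hanti
      have hmem := full_mem ha {i, j} hc1 hc2 hc3
      rw [h {i, j} (by rw [Finset.card_pair hne])] at hmem
      exact absurd hmem (Set.notMem_empty c)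
    · intro hE F hF2
      obtain ⟨i, j, hi, hj, hne⟩ := Finset.one_lt_card_iff.mp (by omega : 1 < F.card)
      exact no_full ha hi hj hne (hE i j) (hE j i)
  exact ⟨by rw [part2]; omega, part2, hiff0.trans (hiffempty.trans hiffE),
    hiff0.trans hiffempty⟩
end

section
/- Let G be an unmixed bipartite graph on {x_1,...,x_n} ∪ {y_1,...,y_n} without isolated vertices. Then e(A(G)) ≤ n!·Σ_{l=0}^{n} 1/l!, where e(A(G)) = Σ_{F ⊆ [n], rank(L_{G_F}) = |F|} f^F_{|F|} (convention: F = ∅ contributes 1), with equality if and only if L_{G_F} is the full Boolean lattice on {p_i : i ∈ F} for every nonempty F ⊆ [n]. -/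
section Aux

variable {n : ℕ}

/-- Full (Boolean) chains of subsets of `F`: chains of `F.card + 1` subsets of `F`. -/
def BCh (n : ℕ) (F : Finset (Fin n)) : Set (Set (Set (Fin n))) :=
  {c | c ⊆ {α | α ⊆ (F : Set (Fin n))} ∧ IsChain (· ⊆ ·) c ∧ c.ncard = F.card + 1}

lemma BCh_subset_of_ncard_le {F : Finset (Fin n)} {c : Set (Set (Fin n))}
    (hc : c ∈ BCh n F) {α β : Set (Fin n)} (hα : α ∈ c) (hβ : β ∈ c)
    (h : α.ncard ≤ β.ncard) : α ⊆ β := by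
  rcases eq_or_ne α β with rfl | hne
  · exact subset_rfl
  · rcases hc.2.1 hα hβ hne with h' | h'
    · exact h'
    · exact (Set.eq_of_subset_of_ncard_le h' h).symm.subset

lemma BCh_exists_ncard {F : Finset (Fin n)} {c : Set (Set (Fin n))}
    (hc : c ∈ BCh n F) {k : ℕ} (hk : k ≤ F.card) : ∃ α ∈ c, α.ncard = k := by
  have hinj : Set.InjOn Set.ncard c := fun α hα β hβ h =>
    Set.Subset.antisymm (BCh_subset_of_ncard_le hc hα hβ h.le)
      (BCh_subset_of_ncard_le hc hβ hα h.ge)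
  have hsub : Set.ncard '' c ⊆ Set.Iic F.card := by
    rintro k ⟨α, hα, rfl⟩
    exact Set.mem_Iic.mpr ((Set.ncard_le_ncard (hc.1 hα) (Set.toFinite _)).trans
      (Set.ncard_coe_finset F).le)
  have hIic : (Set.Iic F.card).ncard = F.card + 1 := by
    rw [← Finset.coe_Iic, Set.ncard_coe_finset, Nat.card_Iic]
  have himg := Set.eq_of_subset_of_ncard_le hsub
    (by rw [hIic, Set.ncard_image_of_injOn hinj, hc.2.2]) (Set.finite_Iic _)
  have hk' : k ∈ Set.ncard '' c := by rw [himg]; exact Set.mem_Iic.mpr hk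
  obtain ⟨α, hα, h⟩ := hk'
  exact ⟨α, hα, h⟩

lemma BCh_top_mem {F : Finset (Fin n)} {c : Set (Set (Fin n))}
    (hc : c ∈ BCh n F) : (F : Set (Fin n)) ∈ c := by
  obtain ⟨α, hα, hcard⟩ := BCh_exists_ncard hc (le_refl F.card)
  have : α = (F : Set (Fin n)) :=
    Set.eq_of_subset_of_ncard_le (hc.1 hα) (by rw [Set.ncard_coe_finset, hcard])
  rwa [← this]

lemma BCh_coe_notMem {F : Finset (Fin n)} {i : Fin n} (hi : i ∈ F) {c : Set (Set (Fin n))}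
    (hc : c ∈ BCh n (F.erase i)) : (F : Set (Fin n)) ∉ c := by
  intro h
  have h2 : (F : Set (Fin n)) ⊆ ((F.erase i : Finset (Fin n)) : Set (Fin n)) := hc.1 h
  exact (Finset.notMem_erase i F) (Finset.mem_coe.mp (h2 (Finset.mem_coe.mpr hi)))

lemma BCh_insert_mem {F : Finset (Fin n)} {i : Fin n} (hi : i ∈ F) {c : Set (Set (Fin n))}
    (hc : c ∈ BCh n (F.erase i)) : insert (F : Set (Fin n)) c ∈ BCh n F := by
  have herase : ((F.erase i : Finset (Fin n)) : Set (Fin n)) ⊆ (F : Set (Fin n)) :=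
    Finset.coe_subset.mpr (Finset.erase_subset i F)
  have hpos : 0 < F.card := Finset.card_pos.mpr ⟨i, hi⟩
  refine ⟨?_, ?_, ?_⟩
  · intro α hα
    rcases Set.mem_insert_iff.mp hα with rfl | hα
    · exact fun x hx => hx
    · exact (hc.1 hα).trans herase
  · exact hc.2.1.insert (fun β hβ _ => Or.inr ((hc.1 hβ).trans herase))
  · rw [Set.ncard_insert_of_notMem (BCh_coe_notMem hi hc), hc.2.2,
      Finset.card_erase_of_mem hi]
    omega

lemma ncard_biUnion_eq {β γ : Type*} [Finite β] [DecidableEq γ] (s : Finset γ) (t : γ → Set β)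
    (h : ∀ a ∈ s, ∀ b ∈ s, a ≠ b → Disjoint (t a) (t b)) :
    (⋃ i ∈ s, t i).ncard = ∑ i ∈ s, (t i).ncard := by
  induction s using Finset.induction_on with
  | empty => simp
  | @insert a s ha ih =>
    rw [Finset.set_biUnion_insert, Finset.sum_insert ha,
      Set.ncard_union_eq ?_ (Set.toFinite _) (Set.toFinite _),
      ih (fun x hx y hy hxy => h x (Finset.mem_insert_of_mem hx)
        y (Finset.mem_insert_of_mem hy) hxy)]
    exact Set.disjoint_iUnion₂_right.mpr fun x hx =>
      h a (Finset.mem_insert_self a s) x (Finset.mem_insert_of_mem hx)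
        (fun he => ha (he ▸ hx))

lemma BCh_eq_biUnion {F : Finset (Fin n)} (hF : F.Nonempty) :
    BCh n F = ⋃ i ∈ F, (insert (F : Set (Fin n))) '' BCh n (F.erase i) := by
  obtain ⟨m, hm⟩ := Nat.exists_eq_succ_of_ne_zero (Finset.card_ne_zero.mpr hF)
  ext c
  simp only [Set.mem_iUnion, Set.mem_image, exists_prop]
  constructor
  · intro hc
    obtain ⟨β, hβ, hβcard⟩ := BCh_exists_ncard hc (show m ≤ F.card by omega)
    have hFcard : (F : Set (Fin n)).ncard = F.card := Set.ncard_coe_finset F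
    have hβne : β ≠ (F : Set (Fin n)) := by
      intro h; rw [h, hFcard] at hβcard; omega
    have hnsub : ¬ ((F : Set (Fin n)) ⊆ β) := fun h =>
      hβne (Set.Subset.antisymm (hc.1 hβ) h)
    obtain ⟨i, hiF, hiβ⟩ := Set.not_subset.mp hnsub
    have hiF' : i ∈ F := Finset.mem_coe.mp hiF
    have hsmall : ∀ α ∈ c, α ≠ (F : Set (Fin n)) → α ⊆ β := by
      intro α hα hαne
      refine BCh_subset_of_ncard_le hc hα hβ ?_
      rw [hβcard]
      by_contra hlt
      push_neg at hlt
      have : α = (F : Set (Fin n)) :=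
        Set.eq_of_subset_of_ncard_le (hc.1 hα) (by rw [hFcard]; omega)
      exact hαne this
    have hFc : (F : Set (Fin n)) ∈ c := BCh_top_mem hc
    refine ⟨i, hiF', c \ {(F : Set (Fin n))}, ⟨?_, ?_, ?_⟩, ?_⟩
    · rintro α ⟨hα, hαne⟩
      intro x hx
      have hxβ : x ∈ β := hsmall α hα hαne hx
      have hxF : x ∈ F := Finset.mem_coe.mp (hc.1 hα hx)
      refine Finset.mem_coe.mpr (Finset.mem_erase.mpr ⟨?_, hxF⟩)
      intro he
      exact hiβ (he ▸ hxβ)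
    · exact fun x hx y hy hxy => hc.2.1 hx.1 hy.1 hxy
    · rw [Set.ncard_diff_singleton_of_mem hFc, hc.2.2, Finset.card_erase_of_mem hiF']
      omega
    · rw [Set.insert_diff_singleton, Set.insert_eq_self.mpr hFc]
  · rintro ⟨i, hi, c', hc', rfl⟩
    exact BCh_insert_mem hi hc'

lemma BCh_ncard (F : Finset (Fin n)) : (BCh n F).ncard = F.card.factorial := by
  classical
  induction' F using Finset.strongInductionOn with F ih
  rcases F.eq_empty_or_nonempty with rfl | hF
  · have hBe : BCh n (∅ : Finset (Fin n)) = {({(∅ : Set (Fin n))} : Set (Set (Fin n)))} := by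
      ext c
      constructor
      · intro hc
        obtain ⟨a, rfl⟩ := Set.ncard_eq_one.mp hc.2.2
        have : a ⊆ (↑(∅ : Finset (Fin n)) : Set (Fin n)) := hc.1 rfl
        rw [Finset.coe_empty, Set.subset_empty_iff] at this
        rw [this]
        rfl
      · rintro rfl
        refine ⟨?_, Set.subsingleton_singleton.isChain, by simp⟩
        intro α hα
        rw [Set.mem_singleton_iff] at hα
        simp [hα]
    rw [hBe]
    simp
  · obtain ⟨m, hm⟩ := Nat.exists_eq_succ_of_ne_zero (Finset.card_ne_zero.mpr hF)
    have hdisj : ∀ a ∈ F, ∀ b ∈ F, a ≠ b →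
        Disjoint ((insert (F : Set (Fin n))) '' BCh n (F.erase a))
          ((insert (F : Set (Fin n))) '' BCh n (F.erase b)) := by
      intro a ha b hb hab
      rw [Set.disjoint_left]
      rintro c ⟨c₁, hc₁, rfl⟩ ⟨c₂, hc₂, hceq⟩
      have h1 : c₁ = c₂ := by
        have e1 : insert (F : Set (Fin n)) c₁ \ {(F : Set (Fin n))} = c₁ :=
          Set.insert_diff_self_of_notMem (BCh_coe_notMem ha hc₁)
        have e2 : insert (F : Set (Fin n)) c₂ \ {(F : Set (Fin n))} = c₂ :=
          Set.insert_diff_self_of_notMem (BCh_coe_notMem hb hc₂)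
        rw [← e1, ← e2, hceq]
      have htop : ((F.erase a : Finset (Fin n)) : Set (Fin n)) ∈ c₂ := by
        rw [← h1]; exact BCh_top_mem hc₁
      have hsub : ((F.erase a : Finset (Fin n)) : Set (Fin n)) ⊆
          ((F.erase b : Finset (Fin n)) : Set (Fin n)) := hc₂.1 htop
      have hbmem : b ∈ F.erase a := Finset.mem_erase.mpr ⟨hab.symm, hb⟩
      exact (Finset.notMem_erase b F)
        (Finset.mem_coe.mp (hsub (Finset.mem_coe.mpr hbmem)))
    rw [BCh_eq_biUnion hF, ncard_biUnion_eq F _ hdisj]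
    have himg : ∀ i ∈ F, ((insert (F : Set (Fin n))) '' BCh n (F.erase i)).ncard
        = m.factorial := by
      intro i hi
      have hinj : Set.InjOn (insert (F : Set (Fin n))) (BCh n (F.erase i)) := by
        intro c₁ hc₁ c₂ hc₂ hceq
        have e1 : insert (F : Set (Fin n)) c₁ \ {(F : Set (Fin n))} = c₁ :=
          Set.insert_diff_self_of_notMem (BCh_coe_notMem hi hc₁)
        have e2 : insert (F : Set (Fin n)) c₂ \ {(F : Set (Fin n))} = c₂ :=
          Set.insert_diff_self_of_notMem (BCh_coe_notMem hi hc₂)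
        rw [← e1, ← e2, hceq]
      have hcard : (F.erase i).card = m := by
        rw [Finset.card_erase_of_mem hi, hm]
        omega
      rw [Set.ncard_image_of_injOn hinj, ih (F.erase i) (Finset.erase_ssubset hi), hcard]
    rw [Finset.sum_congr rfl himg, Finset.sum_const, hm, Nat.factorial_succ]
    simp [mul_comm]

lemma BCh_nonempty (F : Finset (Fin n)) : (BCh n F).Nonempty :=
  Set.nonempty_of_ncard_ne_zero (by rw [BCh_ncard]; exact (Nat.factorial_pos _).ne')

lemma exists_BCh_mem (F : Finset (Fin n)) :
    ∀ α : Set (Fin n), α ⊆ (F : Set (Fin n)) → ∃ c ∈ BCh n F, α ∈ c := by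
  classical
  induction' F using Finset.strongInductionOn with F ih
  intro α hα
  rcases eq_or_ne α (F : Set (Fin n)) with rfl | hne
  · obtain ⟨c, hc⟩ := BCh_nonempty F
    exact ⟨c, hc, BCh_top_mem hc⟩
  · have hnsub : ¬ ((F : Set (Fin n)) ⊆ α) := fun h =>
      hne (Set.Subset.antisymm hα h)
    obtain ⟨i, hiF, hiα⟩ := Set.not_subset.mp hnsub
    have hiF' : i ∈ F := Finset.mem_coe.mp hiF
    have hα' : α ⊆ ((F.erase i : Finset (Fin n)) : Set (Fin n)) := by
      intro x hx
      refine Finset.mem_coe.mpr (Finset.mem_erase.mpr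
        ⟨fun he => hiα (he ▸ hx), Finset.mem_coe.mp (hα hx)⟩)
    obtain ⟨c, hc, hαc⟩ := ih (F.erase i) (Finset.erase_ssubset hiF') α hα'
    exact ⟨insert (F : Set (Fin n)) c, BCh_insert_mem hiF' hc, Set.mem_insert_of_mem _ hαc⟩

lemma LGF_empty (E : Fin n → Fin n → Prop) :
    LGF n E ((∅ : Finset (Fin n)) : Set (Fin n))
      = {α | α ⊆ ((∅ : Finset (Fin n)) : Set (Fin n))} := by
  ext α
  simp only [LGF, Set.mem_setOf_eq, Finset.coe_empty, Set.subset_empty_iff]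
  constructor
  · rintro ⟨h, -⟩; exact h
  · rintro rfl
    have h0 : coverSetOn n (∅ : Set (Fin n)) ∅ = ∅ := by simp [coverSetOn]
    refine ⟨rfl, ⟨⟨?_, ?_⟩, ?_⟩⟩
    · rw [h0]; intro v hv; exact absurd hv (Set.notMem_empty v)
    · intro i hi; exact absurd hi (Set.notMem_empty i)
    · intro D hD
      rw [h0] at hD
      exact fun _ => hD.ne (Set.subset_empty_iff.mp hD.subset)

/-- Chains of full length whose members lie in `L_{G_F}`. -/
def SCh (n : ℕ) (E : Fin n → Fin n → Prop) (F : Finset (Fin n)) : Set (Set (Set (Fin n))) :=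
  {c | c ⊆ LGF n E (F : Set (Fin n)) ∧ IsChain (· ⊆ ·) c ∧ c.ncard = F.card + 1}

lemma SCh_subset_BCh {E : Fin n → Fin n → Prop} {F : Finset (Fin n)} :
    SCh n E F ⊆ BCh n F := fun _ hc => ⟨fun _ hα => (hc.1 hα).1, hc.2⟩

lemma sep_eq_SCh {E : Fin n → Fin n → Prop} {F : Finset (Fin n)} :
    {c ∈ MaxChains n E (F : Set (Fin n)) | c.ncard = F.card + 1} = SCh n E F := by
  ext c
  constructor
  · rintro ⟨⟨h1, h2, -⟩, h3⟩; exact ⟨h1, h2, h3⟩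
  · rintro ⟨h1, h2, h3⟩
    have hB : c ∈ BCh n F := ⟨fun _ hα => (h1 hα).1, h2, h3⟩
    refine ⟨⟨h1, h2, ?_⟩, h3⟩
    intro c' hc'1 hc'2 hcc'
    refine Set.Subset.antisymm ?_ hcc'
    intro β hβ
    have hβF : β ⊆ (F : Set (Fin n)) := (hc'1 hβ).1
    have hβcard : β.ncard ≤ F.card :=
      (Set.ncard_le_ncard hβF (Set.toFinite _)).trans (Set.ncard_coe_finset F).le
    obtain ⟨γ, hγ, hγcard⟩ := BCh_exists_ncard hB hβcard
    rcases eq_or_ne β γ with rfl | hne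
    · exact hγ
    · rcases hc'2 hβ (hcc' hγ) hne with h | h
      · rw [Set.eq_of_subset_of_ncard_le h (by rw [hγcard])]; exact hγ
      · rw [← Set.eq_of_subset_of_ncard_le h (by rw [hγcard])]; exact hγ

end Aux

/-- Corollary 3.6 (upper bound): `e(A(G)) ≤ n!·Σ_{l=0}^n 1/l!
= Σ_{l=0}^n C(n,l)·l!`, with equality iff `L_{G_F}` is the full Boolean
lattice on `{p i : i ∈ F}` for every nonempty `F ⊆ [n]`. -/
theorem stmt14 (n : ℕ) (hn : 1 ≤ n) (E : Fin n → Fin n → Prop)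
    (ha : ∀ i, E i i)
    (hb : ∀ i j k : Fin n, i ≠ j → j ≠ k → i ≠ k → E i j → E j k → E i k) :
    mult n E ≤ ∑ l ∈ Finset.range (n + 1), n.choose l * l.factorial ∧
    (mult n E = ∑ l ∈ Finset.range (n + 1), n.choose l * l.factorial ↔
      ∀ F : Finset (Fin n), F.Nonempty →
        LGF n E (↑F : Set (Fin n)) = {α | α ⊆ (↑F : Set (Fin n))}) := by
  classical
  have hmult : mult n E = ∑ F : Finset (Fin n), (SCh n E F).ncard := by
    unfold mult
    exact Finset.sum_congr rfl fun F _ => by rw [sep_eq_SCh]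
  have hle : ∀ F : Finset (Fin n), (SCh n E F).ncard ≤ F.card.factorial := fun F =>
    (Set.ncard_le_ncard SCh_subset_BCh (Set.toFinite _)).trans (BCh_ncard F).le
  have hsum : ∑ F : Finset (Fin n), F.card.factorial
      = ∑ l ∈ Finset.range (n + 1), n.choose l * l.factorial := by
    rw [← Finset.powerset_univ, Finset.sum_powerset_apply_card]
    simp [Nat.smul_one_eq_cast]
  constructor
  · rw [hmult, ← hsum]
    exact Finset.sum_le_sum fun F _ => hle F
  · rw [hmult, ← hsum,
      Finset.sum_eq_sum_iff_of_le fun F _ => hle F]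
    constructor
    · intro h F hF
      have hFe : SCh n E F = BCh n F :=
        Set.eq_of_subset_of_ncard_le SCh_subset_BCh
          (by rw [BCh_ncard, h F (Finset.mem_univ F)]) (Set.toFinite _)
      refine Set.Subset.antisymm (fun α hα => hα.1) ?_
      intro α hα
      obtain ⟨c, hc, hαc⟩ := exists_BCh_mem F α hα
      rw [← hFe] at hc
      exact hc.1 hαc
    · intro h F _
      have hL : LGF n E (F : Set (Fin n)) = {α | α ⊆ (F : Set (Fin n))} := by
        rcases F.eq_empty_or_nonempty with rfl | hF
        · exact LGF_empty E
        · exact h F hF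
      have hSB : SCh n E F = BCh n F := by
        simp only [SCh, BCh, hL]
      rw [hSB, BCh_ncard]
end

section
/- Let L be a finite sublattice of the Boolean lattice on {p_1,...,p_n} with ∅ ∈ L and {p_1,...,p_n} ∈ L in which all maximal chains have the same length r. Then the number of maximal chains of L is at most n!, with equality if and only if L is the full Boolean lattice (in which case r = n). -/
/-- The set of maximal chains of a subset `L` of the Boolean lattice. -/
def MaxChainsOf {n : ℕ} (L : Set (Set (Fin n))) : Set (Set (Set (Fin n))) :=
  {c | c ⊆ L ∧ IsChain (· ⊆ ·) c ∧
    ∀ c', c' ⊆ L → IsChain (· ⊆ ·) c' → c ⊆ c' → c' = c}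

/-!
Any maximal chain `c` of `L` lies in a maximal chain `C` of the Boolean lattice, and then
`c = C ∩ L`; so `C ↦ C ∩ L` maps the maximal Boolean chains, which are the `n!` chains
`k ↦ σ '' {j | j < k}` of the permutations `σ`, onto a superset of the maximal chains of `L`.
If there are `n!` of the latter, this map is injective and each `C ∩ L` is maximal in `L`.
A set `M ∉ L` on a maximal Boolean chain `C` then sits strictly between two neighbours
`A ⊂ M ⊂ B` in `C ∩ L`, and for `y ∈ B \ M` the set `A ∪ {y}` is incomparable with `M` but
comparable with all of `C ∩ L`; any maximal Boolean chain through it and `C ∩ L` has the same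
trace on `L` as `C`, contradicting injectivity.
-/

open Set

open scoped Nat

namespace Equiv.Perm

variable {n : ℕ} (σ : Equiv.Perm (Fin n))

def permChain (k : Fin (n + 1)) : Set (Fin n) :=
  σ '' {j | j.castSucc < k}

@[simp] lemma permChain_zero : σ.permChain 0 = ∅ := by
  simp [permChain]

@[simp] lemma permChain_last : σ.permChain (Fin.last n) = univ := by
  simp [permChain, Fin.castSucc_lt_last]

lemma permChain_succ (k : Fin n) :
    σ.permChain k.succ = insert (σ k) (σ.permChain k.castSucc) := by
  rw [permChain, permChain, ← image_insert_eq]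
  congr 1
  ext j
  simp [Fin.castSucc_lt_succ_iff, le_iff_lt_or_eq, or_comm]

lemma apply_notMem_permChain_castSucc (k : Fin n) : σ k ∉ σ.permChain k.castSucc := by
  simp [permChain]

@[simp] lemma ncard_permChain (k : Fin (n + 1)) : (σ.permChain k).ncard = k := by
  induction k using Fin.induction with
  | zero => simp
  | succ k ih =>
    rw [permChain_succ, ncard_insert_of_notMem (σ.apply_notMem_permChain_castSucc k), ih]
    simp

lemma permChain_injective : Function.Injective σ.permChain :=
  fun k l h ↦ Fin.ext (by simpa using congrArg ncard h)

lemma ncard_range_permChain : (range σ.permChain).ncard = n + 1 := by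
  rw [ncard_range_of_injective σ.permChain_injective, Nat.card_fin]

lemma isMaxChain_range_permChain : IsMaxChain (· ⊆ ·) (range σ.permChain) :=
  IsMaxChain.range_fin_of_covBy σ.permChain_zero σ.permChain_last fun k ↦ by
    rw [permChain_succ]
    exact (covBy_insert (σ.apply_notMem_permChain_castSucc k)).wcovBy

lemma range_permChain_injective :
    Function.Injective fun σ : Equiv.Perm (Fin n) ↦ range σ.permChain := by
  intro σ τ h
  have hστ (k : Fin (n + 1)) : σ.permChain k = τ.permChain k := by
    obtain ⟨l, hl⟩ : σ.permChain k ∈ range τ.permChain :=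
      (show range σ.permChain = range τ.permChain from h) ▸ mem_range_self k
    obtain rfl : l = k := Fin.ext (by simpa using congrArg ncard hl)
    exact hl.symm
  ext k
  have hk : σ k ∈ insert (τ k) (σ.permChain k.castSucc) := by
    rw [hστ, ← permChain_succ, ← hστ, permChain_succ]
    exact mem_insert _ _
  exact congrArg Fin.val (hk.resolve_right (σ.apply_notMem_permChain_castSucc k))

end Equiv.Perm

section Chain

variable {α : Type*} [Finite α] {c : Set (Set α)}

lemma Set.exists_notMem_insert_eq_of_ncard_eq_succ {A B : Set α} (hAB : A ⊆ B)
    (hcard : B.ncard = A.ncard + 1) : ∃ x ∉ A, insert x A = B := by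
  obtain ⟨x, hxB, hxA⟩ := exists_of_ssubset (hAB.ssubset_of_ne (by rintro rfl; omega))
  refine ⟨x, hxA, eq_of_subset_of_ncard_le (insert_subset hxB hAB) ?_⟩
  rw [ncard_insert_of_notMem hxA, hcard]

lemma IsChain.subset_of_ncard_le (hc : IsChain (· ⊆ ·) c) {A B : Set α} (hA : A ∈ c)
    (hB : B ∈ c) (h : A.ncard ≤ B.ncard) : A ⊆ B :=
  (hc.total hA hB).elim id fun hBA ↦ (eq_of_subset_of_ncard_le hBA h).ge

lemma IsMaxChain.mem_of_forall_total {β : Type*} {r : β → β → Prop} {s : Set β} {a : β}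
    (hs : IsMaxChain r s) (h : ∀ b ∈ s, r a b ∨ r b a) : a ∈ s :=
  (hs.2 (hs.1.insert fun b hb _ ↦ h b hb) (subset_insert a s)) ▸ mem_insert a s

lemma IsMaxChain.exists_mem_ncard_eq (hc : IsMaxChain (· ⊆ ·) c) {k : ℕ}
    (hk : k ≤ Nat.card α) : ∃ A ∈ c, A.ncard = k := by
  obtain ⟨A, ⟨hAc, hAk⟩, hAmax⟩ := exists_max_image {A ∈ c | A.ncard ≤ k} ncard (toFinite _)
    ⟨∅, hc.bot_mem, by simp⟩
  obtain ⟨B, ⟨hBc, hkB⟩, hBmin⟩ := exists_min_image {B ∈ c | k ≤ B.ncard} ncard (toFinite _)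
    ⟨univ, hc.top_mem, by simpa⟩
  obtain ⟨M, hAM, hMB, hMk⟩ :=
    exists_subsuperset_card_eq (hc.isChain.subset_of_ncard_le hAc hBc (hAk.trans hkB)) hAk hkB
  refine ⟨M, hc.mem_of_forall_total fun D hD ↦ ?_, hMk⟩
  rcases le_total D.ncard k with hDk | hkD
  · exact .inr ((hc.isChain.subset_of_ncard_le hD hAc (hAmax D ⟨hD, hDk⟩)).trans hAM)
  · exact .inl (hMB.trans (hc.isChain.subset_of_ncard_le hBc hD (hBmin D ⟨hD, hkD⟩)))

lemma IsChain.exists_incomparable_isChain_insert (hc : IsChain (· ⊆ ·) c) (hbot : ∅ ∈ c)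
    (htop : univ ∈ c) {M : Set α} (hM : M ∉ c) (hMc : ∀ D ∈ c, D ⊆ M ∨ M ⊆ D) :
    ∃ Q, (¬Q ⊆ M ∧ ¬M ⊆ Q) ∧ IsChain (· ⊆ ·) (insert Q c) := by
  obtain ⟨A, ⟨hAc, hAM⟩, hAmax⟩ := exists_max_image {A ∈ c | A ⊆ M} ncard (toFinite _)
    ⟨∅, hbot, empty_subset M⟩
  obtain ⟨B, ⟨hBc, hMB⟩, hBmin⟩ := exists_min_image {B ∈ c | M ⊆ B} ncard (toFinite _)
    ⟨univ, htop, subset_univ M⟩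
  obtain ⟨x, hxM, hxA⟩ := exists_of_ssubset (hAM.ssubset_of_ne fun h ↦ hM (h ▸ hAc))
  obtain ⟨y, hyB, hyM⟩ := exists_of_ssubset (hMB.ssubset_of_ne fun h ↦ hM (h ▸ hBc))
  refine ⟨insert y A, ⟨fun h ↦ hyM (h (mem_insert y A)), fun h ↦ ?_⟩,
    hc.insert fun D hD _ ↦ ?_⟩
  · rcases h hxM with rfl | hxA'
    exacts [hyM hxM, hxA hxA']
  rcases hMc D hD with hDM | hMD
  · exact .inr ((hc.subset_of_ncard_le hD hAc (hAmax D ⟨hD, hDM⟩)).trans (subset_insert y A))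
  · exact .inl ((insert_subset hyB (hAM.trans hMB)).trans
      (hc.subset_of_ncard_le hBc hD (hBmin D ⟨hD, hMD⟩)))

end Chain

section MaximalChains

variable {n : ℕ}

theorem IsMaxChain.exists_range_permChain_eq {c : Set (Set (Fin n))}
    (hc : IsMaxChain (· ⊆ ·) c) : ∃ σ : Equiv.Perm (Fin n), range σ.permChain = c := by
  choose F hFc hF using fun k : Fin (n + 1) ↦
    hc.exists_mem_ncard_eq (k := k) (by simpa using k.is_le)
  have hmono : Monotone F := fun k l hkl ↦
    hc.isChain.subset_of_ncard_le (hFc k) (hFc l) (by simpa [hF])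
  choose g hgF hg using fun k : Fin n ↦
    exists_notMem_insert_eq_of_ncard_eq_succ (hmono k.castSucc_le_succ) (by simp [hF])
  have hg_inj : Function.Injective g := .of_lt_imp_ne fun k l hkl hgkl ↦
    hgF l (hmono (Fin.succ_le_castSucc_iff.2 hkl) (hgkl ▸ hg k ▸ mem_insert _ _))
  let σ : Equiv.Perm (Fin n) := .ofBijective g hg_inj.bijective_of_finite
  have hσF : σ.permChain = F := funext fun k ↦ by
    induction k using Fin.induction with
    | zero => rw [σ.permChain_zero, eq_comm, ← ncard_eq_zero]; exact hF 0
    | succ k ih => rw [σ.permChain_succ, ih, ← hg k]; rfl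
  exact ⟨σ, σ.isMaxChain_range_permChain.2 hc.isChain (hσF ▸ range_subset_iff.2 hFc)⟩

theorem ncard_setOf_isMaxChain :
    {c : Set (Set (Fin n)) | IsMaxChain (· ⊆ ·) c}.ncard = n ! := by
  have : {c : Set (Set (Fin n)) | IsMaxChain (· ⊆ ·) c} =
      range fun σ : Equiv.Perm (Fin n) ↦ range σ.permChain :=
    ext fun c ↦ ⟨fun hc ↦ hc.exists_range_permChain_eq, by
      rintro ⟨σ, rfl⟩; exact σ.isMaxChain_range_permChain⟩
  rw [this, ncard_range_of_injective Equiv.Perm.range_permChain_injective, Nat.card_perm,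
    Nat.card_fin]

variable {L : Set (Set (Fin n))}

lemma maxChainsOf_univ : MaxChainsOf (univ : Set (Set (Fin n))) = {c | IsMaxChain (· ⊆ ·) c} :=
  ext fun _ ↦ ⟨fun ⟨_, hc, hmax⟩ ↦ ⟨hc, fun _ hd hcd ↦ (hmax _ (subset_univ _) hd hcd).symm⟩,
    fun ⟨hc, hmax⟩ ↦ ⟨subset_univ _, hc, fun _ _ hd hcd ↦ (hmax hd hcd).symm⟩⟩

lemma inter_eq_of_mem_maxChainsOf {c C : Set (Set (Fin n))} (hc : c ∈ MaxChainsOf L)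
    (hC : IsChain (· ⊆ ·) C) (hcC : c ⊆ C) : C ∩ L = c :=
  hc.2.2 _ inter_subset_right (hC.mono inter_subset_left) (subset_inter hcC hc.1)

lemma maxChainsOf_subset_image_inter :
    MaxChainsOf L ⊆ (· ∩ L) '' {C | IsMaxChain (· ⊆ ·) C} := fun c hc ↦ by
  obtain ⟨C, hC, hcC⟩ := hc.2.1.exists_maxChain
  exact ⟨C, hC, inter_eq_of_mem_maxChainsOf hc hC.isChain hcC⟩

lemma ncard_maxChainsOf_le : (MaxChainsOf L).ncard ≤ n ! :=
  calc (MaxChainsOf L).ncard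
      ≤ ((· ∩ L) '' {C | IsMaxChain (· ⊆ ·) C}).ncard :=
        ncard_le_ncard maxChainsOf_subset_image_inter (toFinite _)
    _ ≤ {C : Set (Set (Fin n)) | IsMaxChain (· ⊆ ·) C}.ncard := ncard_image_le (toFinite _)
    _ = n ! := ncard_setOf_isMaxChain

lemma eq_univ_of_ncard_maxChainsOf_eq (hbot : ∅ ∈ L) (htop : univ ∈ L)
    (h : (MaxChainsOf L).ncard = n !) : L = univ := by
  set S := {C : Set (Set (Fin n)) | IsMaxChain (· ⊆ ·) C}
  have himage : (· ∩ L) '' S = MaxChainsOf L := by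
    refine (eq_of_subset_of_ncard_le maxChainsOf_subset_image_inter ?_ (toFinite _)).symm
    rw [h, ← ncard_setOf_isMaxChain]
    exact ncard_image_le (toFinite _)
  have hinj : InjOn (· ∩ L) S :=
    injOn_of_ncard_image_eq (by rw [himage, h, ncard_setOf_isMaxChain])
  refine eq_univ_of_forall fun M ↦ by_contra fun hML ↦ ?_
  obtain ⟨C, hC, hMC⟩ := (IsChain.singleton (r := (· ⊆ ·)) (a := M)).exists_maxChain
  have hMC : M ∈ C := hMC rfl
  have hCL : C ∩ L ∈ MaxChainsOf L := himage ▸ mem_image_of_mem _ hC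
  obtain ⟨Q, hQM, hQc⟩ := (hC.isChain.mono inter_subset_left).exists_incomparable_isChain_insert
    ⟨hC.bot_mem, hbot⟩ ⟨hC.top_mem, htop⟩ (fun h ↦ hML h.2)
    fun D hD ↦ hC.isChain.total hD.1 hMC
  obtain ⟨C', hC', hQC'⟩ := hQc.exists_maxChain
  have hC'C : C' = C :=
    hinj hC' hC (inter_eq_of_mem_maxChainsOf hCL hC'.isChain ((subset_insert _ _).trans hQC'))
  have hQC : Q ∈ C := hC'C ▸ hQC' (mem_insert _ _)
  exact (hC.isChain.total hQC hMC).elim hQM.1 hQM.2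

end MaximalChains

theorem stmt15_general (n : ℕ) (L : Set (Set (Fin n)))
    (hbot : (∅ : Set (Fin n)) ∈ L) (htop : (Set.univ : Set (Fin n)) ∈ L)
    (r : ℕ) (hr : ∀ c ∈ MaxChainsOf L, c.ncard = r + 1) :
    (MaxChainsOf L).ncard ≤ n.factorial ∧
    ((MaxChainsOf L).ncard = n.factorial ↔ L = Set.univ) ∧
    (L = Set.univ → r = n) := by
  refine ⟨ncard_maxChainsOf_le, ⟨eq_univ_of_ncard_maxChainsOf_eq hbot htop, ?_⟩, ?_⟩
  · rintro rfl
    rw [maxChainsOf_univ, ncard_setOf_isMaxChain]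
  · rintro rfl
    have h := hr _ (by
      rw [maxChainsOf_univ]; exact (1 : Equiv.Perm (Fin n)).isMaxChain_range_permChain)
    rw [Equiv.Perm.ncard_range_permChain] at h
    omega

/-- A sublattice `L` of the Boolean lattice on `n` elements containing `∅` and
the full set, all of whose maximal chains have the same length `r`, has at
most `n!` maximal chains, with equality iff `L` is the full Boolean lattice,
in which case `r = n`. -/
theorem stmt15 (n : ℕ) (L : Set (Set (Fin n)))
    (hbot : (∅ : Set (Fin n)) ∈ L) (htop : (Set.univ : Set (Fin n)) ∈ L)
    (hlat : ∀ a ∈ L, ∀ b ∈ L, a ∪ b ∈ L ∧ a ∩ b ∈ L)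
    (r : ℕ) (hr : ∀ c ∈ MaxChainsOf L, c.ncard = r + 1) :
    (MaxChainsOf L).ncard ≤ n.factorial ∧
    ((MaxChainsOf L).ncard = n.factorial ↔ L = Set.univ) ∧
    (L = Set.univ → r = n) :=
  stmt15_general n L hbot htop r hr
end
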